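/- arXiv:2507.21758 — 9 statements merged into one kernel-verified Lean document; each statement's English description precedes it below -/
import Mathlib

section
/- For the grid P = [k_1]×⋯×[k_d] in ℝ^d with d ≥ 2, the minimum number of lines needed to cover all points of P equals min over i of ∏_{j≠i} k_j. -/
/-- The minimum number of lines needed to cover the grid [k_1]×⋯×[k_d]
equals min over i of ∏_{j≠i} k_j. -/
theorem min_lines_covering_grid
    (d : ℕ) (hd : 2 ≤ d) (k : Fin d → ℕ) (hk : ∀ i, 1 ≤ k i)
    (grid : Set (EuclideanSpace ℝ (Fin d)))
    (hgrid : grid = {x | ∀ i, ∃ m : ℕ, 1 ≤ m ∧ m ≤ k i ∧ x i = (m : ℝ)})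
    (IsLine : Set (EuclideanSpace ℝ (Fin d)) → Prop)
    (hIsLine : ∀ L, IsLine L ↔ ∃ a v : EuclideanSpace ℝ (Fin d), v ≠ 0 ∧
      L = {p | ∃ t : ℝ, p = a + t • v}) :
    IsLeast {m : ℕ | ∃ 𝓛 : Finset (Set (EuclideanSpace ℝ (Fin d))),
        𝓛.card = m ∧ (∀ L ∈ 𝓛, IsLine L) ∧ ∀ p ∈ grid, ∃ L ∈ 𝓛, p ∈ L}
      (Finset.univ.inf' (Finset.univ_nonempty_iff.mpr
          (Fin.pos_iff_nonempty.mp (by omega)))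
        (fun i => ∏ j ∈ Finset.univ.erase i, k j)) := by
  classical
  have hne : (Finset.univ : Finset (Fin d)).Nonempty :=
    Finset.univ_nonempty_iff.mpr (Fin.pos_iff_nonempty.mp (by omega))
  set N : Fin d → ℕ := fun i => ∏ j ∈ Finset.univ.erase i, k j with hN
  set pt : (Fin d → ℕ) → EuclideanSpace ℝ (Fin d) := fun c => WithLp.toLp 2 (fun j => (c j : ℝ)) with hpt
  constructor
  · -- membership : construct a covering family of lines
    obtain ⟨i0, -, hi0⟩ := Finset.exists_mem_eq_inf' hne N
    rw [hi0]
    -- direction vector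
    set v : EuclideanSpace ℝ (Fin d) := WithLp.toLp 2 (fun j => if j = i0 then (1:ℝ) else 0) with hv
    have hvne : v ≠ 0 := by
      intro h
      have : v i0 = 0 := by rw [h]; rfl
      simp [hv] at this
    set T : Finset (Fin d → ℕ) :=
      Fintype.piFinset (fun j => if j = i0 then ({1} : Finset ℕ) else Finset.Icc 1 (k j)) with hT
    set Lf : (Fin d → ℕ) → Set (EuclideanSpace ℝ (Fin d)) :=
      fun c => {p | ∃ t : ℝ, p = pt c + t • v} with hLf
    have hmemself : ∀ c : Fin d → ℕ, pt c ∈ Lf c := by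
      intro c
      exact ⟨0, by simp⟩
    have hinj : Set.InjOn Lf T := by
      intro c hc c' hc' hcc
      rw [Finset.mem_coe, hT, Fintype.mem_piFinset] at hc hc'
      have h1 : pt c ∈ Lf c' := by rw [← hcc]; exact hmemself c
      obtain ⟨t, ht⟩ := h1
      funext j
      by_cases hj : j = i0
      · subst hj
        have h2 := hc j; have h3 := hc' j
        simp at h2 h3
        rw [h2, h3]
      · have := congrArg (· j) ht
        simp only [hpt, PiLp.add_apply, PiLp.smul_apply, hv, if_neg hj, smul_eq_mul,
          mul_zero, add_zero] at this
        exact_mod_cast this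
    refine ⟨T.image Lf, ?_, ?_, ?_⟩
    · rw [Finset.card_image_of_injOn hinj, hT, Fintype.card_piFinset]
      have heq : ∀ j, (if j = i0 then ({1} : Finset ℕ) else Finset.Icc 1 (k j)).card
          = if j = i0 then 1 else k j := by
        intro j
        by_cases hj : j = i0 <;> simp [hj, Nat.card_Icc]
      rw [Finset.prod_congr rfl (fun j _ => heq j)]
      rw [← Finset.mul_prod_erase Finset.univ _ (Finset.mem_univ i0), if_pos rfl, one_mul]
      exact Finset.prod_congr rfl (fun j hj => if_neg (Finset.ne_of_mem_erase hj))
    · intro L hL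
      obtain ⟨c, -, rfl⟩ := Finset.mem_image.mp hL
      rw [hIsLine]
      exact ⟨pt c, v, hvne, rfl⟩
    · intro p hp
      rw [hgrid] at hp
      choose m hm1 hm2 hm3 using hp
      set c : Fin d → ℕ := fun j => if j = i0 then 1 else m j with hc
      refine ⟨Lf c, Finset.mem_image_of_mem Lf ?_, ?_⟩
      · rw [hT, Fintype.mem_piFinset]
        intro j
        by_cases hj : j = i0 <;> simp [hc, hj, Finset.mem_Icc, hm1, hm2]
      · refine ⟨(m i0 : ℝ) - 1, ?_⟩
        ext j
        by_cases hj : j = i0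
        · subst hj
          simp only [hpt, PiLp.add_apply, PiLp.smul_apply, hc, hv, smul_eq_mul]
          simp only [if_true, eq_self_iff_true]
          rw [hm3 j]
          push_cast
          ring
        · simp only [hpt, PiLp.add_apply, PiLp.smul_apply, hc, hv, smul_eq_mul]
          rw [if_neg hj, if_neg hj, mul_zero, add_zero]
          exact hm3 j
  · -- lower bound
    intro m hm
    obtain ⟨𝓛, hcard, hlines, hcover⟩ := hm
    obtain ⟨i0, -, hi0⟩ := Finset.exists_max_image Finset.univ k hne
    refine le_trans (Finset.inf'_le N (Finset.mem_univ i0)) ?_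
    -- the grid as a Finset
    set GridF : Finset (EuclideanSpace ℝ (Fin d)) :=
      (Fintype.piFinset (fun j => Finset.Icc 1 (k j))).image pt with hG
    have hGcard : GridF.card = ∏ j, k j := by
      rw [hG, Finset.card_image_of_injOn, Fintype.card_piFinset]
      · exact Finset.prod_congr rfl (fun j _ => by simp [Nat.card_Icc])
      · intro c hc c' hc' h
        funext j
        simpa [hpt] using congrArg (· j) h
    have hGgrid : ∀ p ∈ GridF, p ∈ grid := by
      intro p hp
      rw [hG, Finset.mem_image] at hp
      obtain ⟨c, hc, rfl⟩ := hp
      rw [hgrid]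
      intro j
      rw [Fintype.mem_piFinset] at hc
      have := hc j
      rw [Finset.mem_Icc] at this
      exact ⟨c j, this.1, this.2, rfl⟩
    -- each line contains at most k i0 grid points
    have hline : ∀ L ∈ 𝓛, (GridF.filter (· ∈ L)).card ≤ k i0 := by
      intro L hL
      obtain ⟨a, v, hv, hLeq⟩ := (hIsLine L).mp (hlines L hL)
      obtain ⟨j, hj⟩ : ∃ j, v j ≠ 0 := by
        by_contra h
        push_neg at h
        exact hv (PiLp.ext h)
      calc (GridF.filter (· ∈ L)).card
          ≤ ((Finset.Icc 1 (k j)).image (Nat.cast : ℕ → ℝ)).card := by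
            apply Finset.card_le_card_of_injOn (fun p => p j)
            · intro p hp
              simp only [Finset.mem_coe, Finset.mem_filter] at hp
              obtain ⟨hp1, -⟩ := hp
              rw [hG, Finset.mem_image] at hp1
              obtain ⟨c, hc, rfl⟩ := hp1
              rw [Fintype.mem_piFinset] at hc
              exact Finset.mem_image_of_mem _ (hc j)
            · intro p hp p' hp' hpp
              simp only [Finset.mem_coe, Finset.mem_filter, hLeq] at hp hp'
              simp only [Set.mem_setOf_eq] at hp hp'
              obtain ⟨-, t, rfl⟩ := hp
              obtain ⟨-, t', rfl⟩ := hp'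
              simp only [PiLp.add_apply, PiLp.smul_apply, smul_eq_mul] at hpp
              have : t = t' := by
                have := add_left_cancel hpp
                exact mul_right_cancel₀ hj this
              rw [this]
        _ ≤ (Finset.Icc 1 (k j)).card := Finset.card_image_le
        _ = k j := by simp [Nat.card_Icc]
        _ ≤ k i0 := hi0 j (Finset.mem_univ j)
    have hsub : GridF ⊆ 𝓛.biUnion (fun L => GridF.filter (· ∈ L)) := by
      intro p hp
      obtain ⟨L, hL, hpL⟩ := hcover p (hGgrid p hp)
      exact Finset.mem_biUnion.mpr ⟨L, hL, Finset.mem_filter.mpr ⟨hp, hpL⟩⟩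
    have hmain : ∏ j, k j ≤ m * k i0 := by
      calc ∏ j, k j = GridF.card := hGcard.symm
        _ ≤ (𝓛.biUnion (fun L => GridF.filter (· ∈ L))).card := Finset.card_le_card hsub
        _ ≤ ∑ L ∈ 𝓛, (GridF.filter (· ∈ L)).card := Finset.card_biUnion_le
        _ ≤ ∑ _L ∈ 𝓛, k i0 := Finset.sum_le_sum hline
        _ = m * k i0 := by rw [Finset.sum_const, smul_eq_mul, hcard]
    have hsplit : ∏ j, k j = k i0 * N i0 :=
      (Finset.mul_prod_erase Finset.univ k (Finset.mem_univ i0)).symm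
    have hpos : 0 < k i0 := hk i0
    rw [hsplit, mul_comm] at hmain
    exact Nat.le_of_mul_le_mul_right hmain hpos
end

section
/- The minimum number of lines needed to cover the hypercube {0,1}^d ⊆ ℝ^d is exactly 2^{d-1}. -/
open Finset

/-- The minimum number of lines needed to cover the hypercube {0,1}^d
is exactly 2^{d-1}. -/
theorem min_lines_covering_hypercube
    (d : ℕ) (hd : 1 ≤ d)
    (cube : Set (EuclideanSpace ℝ (Fin d)))
    (hcube : cube = {x | ∀ i, x i = 0 ∨ x i = 1})
    (IsLine : Set (EuclideanSpace ℝ (Fin d)) → Prop)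
    (hIsLine : ∀ L, IsLine L ↔ ∃ a v : EuclideanSpace ℝ (Fin d), v ≠ 0 ∧
      L = {p | ∃ t : ℝ, p = a + t • v}) :
    IsLeast {m : ℕ | ∃ 𝓛 : Finset (Set (EuclideanSpace ℝ (Fin d))),
        𝓛.card = m ∧ (∀ L ∈ 𝓛, IsLine L) ∧ ∀ p ∈ cube, ∃ L ∈ 𝓛, p ∈ L}
      (2 ^ (d - 1)) := by
  classical
  -- coordinate of an affine combination
  have aff_apply : ∀ (x v : EuclideanSpace ℝ (Fin d)) (t : ℝ) (i : Fin d),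
      (x + t • v) i = x i + t * v i := fun _ _ _ _ => rfl
  -- the 0/1 point associated to a boolean vector
  let pt : (Fin d → Bool) → EuclideanSpace ℝ (Fin d) :=
    fun b => WithLp.toLp 2 (fun i => if b i then 1 else 0 : Fin d → ℝ)
  have pt_apply : ∀ b i, pt b i = if b i then 1 else 0 := fun _ _ => rfl
  have pt_inj : Function.Injective pt := by
    intro b b' h
    funext i
    have : pt b i = pt b' i := by rw [h]
    simp only [pt_apply] at this
    cases hb : b i <;> cases hb' : b' i <;> simp [hb, hb'] at this ⊢
  have pt_mem : ∀ b, pt b ∈ cube := by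
    intro b
    rw [hcube]
    intro i
    rw [pt_apply]
    cases b i <;> simp
  have mem_pt : ∀ p ∈ cube, pt (fun i => decide (p i = 1)) = p := by
    intro p hp
    rw [hcube] at hp
    ext i
    show (if decide (p i = 1) = true then (1:ℝ) else 0) = p i
    rcases hp i with h | h <;> simp [h]
  have i0 : Fin d := ⟨0, hd⟩
  have pow_eq : 2 ^ d = 2 ^ (d - 1) * 2 := by
    rw [← pow_succ]; congr 1; omega
  -- cardinality of the half cube
  have card_half : (univ.filter fun b : Fin d → Bool => b i0 = false).card = 2 ^ (d - 1) := by
    have hflip : (univ.filter fun b : Fin d → Bool => b i0 = true).card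
        = (univ.filter fun b : Fin d → Bool => b i0 = false).card := by
      apply Finset.card_bij (fun b _ => Function.update b i0 false)
      · intro b hb; simp
      · intro b hb b' hb' h
        simp only [mem_filter, mem_univ, true_and] at hb hb'
        funext i
        by_cases hi : i = i0
        · subst hi; rw [hb, hb']
        · have := congrFun h i
          simpa [Function.update_of_ne hi] using this
      · intro b hb
        simp only [mem_filter, mem_univ, true_and] at hb
        refine ⟨Function.update b i0 true, by simp, ?_⟩
        funext i
        by_cases hi : i = i0
        · subst hi; simp [hb]
        · simp [Function.update_of_ne hi]
    have htot := Finset.card_filter_add_card_filter_not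
      (s := (univ : Finset (Fin d → Bool))) (p := fun b => b i0 = false)
    have hcard : (univ : Finset (Fin d → Bool)).card = 2 ^ d := by
      simp [Finset.card_univ]
    have hneg : (univ.filter fun b : Fin d → Bool => ¬ (b i0 = false)).card
        = (univ.filter fun b : Fin d → Bool => b i0 = true).card := by
      congr 1
      apply Finset.filter_congr
      intro b _
      simp
    set n := (univ.filter fun b : Fin d → Bool => b i0 = false).card with hn
    have h2 : 2 * n = 2 ^ d := by
      rw [← hcard, ← htot, hneg, hflip]; ring
    have : 2 * n = 2 * 2 ^ (d - 1) := by rw [h2, pow_eq]; ring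
    exact Nat.eq_of_mul_eq_mul_left (by norm_num) this
  constructor
  · -- membership: construct the covering family
    let e0 : EuclideanSpace ℝ (Fin d) := EuclideanSpace.single i0 (1 : ℝ)
    have e0_apply : ∀ i, e0 i = if i = i0 then 1 else 0 := by
      intro i; simp [e0, EuclideanSpace.single_apply]
    have e0_ne : e0 ≠ 0 := by
      intro h
      have : e0 i0 = 0 := by rw [h]; rfl
      rw [e0_apply] at this
      simp at this
    let line : (Fin d → Bool) → Set (EuclideanSpace ℝ (Fin d)) :=
      fun b => {p | ∃ t : ℝ, p = pt b + t • e0}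
    refine ⟨(univ.filter fun b : Fin d → Bool => b i0 = false).image line, ?_, ?_, ?_⟩
    · rw [Finset.card_image_of_injOn, card_half]
      intro b hb b' hb' h
      simp only [coe_filter, Set.mem_setOf_eq, mem_univ, true_and] at hb hb'
      have hmem : pt b ∈ line b' := by
        rw [← h]; exact ⟨0, by simp⟩
      obtain ⟨t, ht⟩ := hmem
      funext i
      by_cases hi : i = i0
      · subst hi; rw [hb, hb']
      · have : pt b i = (pt b' + t • e0) i := by rw [← ht]
        rw [aff_apply, e0_apply, if_neg hi, mul_zero, add_zero, pt_apply, pt_apply] at this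
        cases hbi : b i <;> cases hbi' : b' i <;> simp [hbi, hbi'] at this ⊢
    · intro L hL
      simp only [mem_image] at hL
      obtain ⟨b, _, rfl⟩ := hL
      rw [hIsLine]
      exact ⟨pt b, e0, e0_ne, rfl⟩
    · intro p hp
      set c : Fin d → Bool := fun i => decide (p i = 1) with hc
      refine ⟨line (Function.update c i0 false), ?_, ?_⟩
      · apply Finset.mem_image_of_mem
        simp
      · refine ⟨p i0, ?_⟩
        have hpc : pt c = p := mem_pt p hp
        ext i
        rw [aff_apply, e0_apply, pt_apply]
        by_cases hi : i = i0
        · subst hi; simp [Function.update_self]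
        · rw [Function.update_of_ne hi, if_neg hi, mul_zero, add_zero]
          have : pt c i = p i := by rw [hpc]
          rw [pt_apply] at this
          exact this.symm
  · -- lower bound
    rintro m ⟨𝓛, hcard, hlines, hcover⟩
    set cubeF : Finset (EuclideanSpace ℝ (Fin d)) := univ.image pt with hcubeF
    have hcubeF_card : cubeF.card = 2 ^ d := by
      rw [hcubeF, Finset.card_image_of_injective _ pt_inj]
      simp [Finset.card_univ]
    have hsub : cubeF ⊆ 𝓛.biUnion fun L => cubeF.filter (· ∈ L) := by
      intro p hp
      have hpc : p ∈ cube := by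
        simp only [hcubeF, mem_image, mem_univ, true_and] at hp
        obtain ⟨b, rfl⟩ := hp
        exact pt_mem b
      obtain ⟨L, hL, hpL⟩ := hcover p hpc
      exact Finset.mem_biUnion.2 ⟨L, hL, Finset.mem_filter.2 ⟨hp, hpL⟩⟩
    have hbound : ∀ L ∈ 𝓛, (cubeF.filter (· ∈ L)).card ≤ 2 := by
      intro L hL
      obtain ⟨a, v, hv, rfl⟩ := (hIsLine L).1 (hlines L hL)
      obtain ⟨i, hi⟩ : ∃ i, v i ≠ 0 := by
        by_contra h
        push_neg at h
        exact hv (by ext j; exact h j)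
      have h01 : ((({0, 1} : Finset ℝ)).card) = 2 := by norm_num
      calc (cubeF.filter
            (· ∈ {p : EuclideanSpace ℝ (Fin d) | ∃ t : ℝ, p = a + t • v})).card
          ≤ ({0, 1} : Finset ℝ).card := by
            apply Finset.card_le_card_of_injOn (fun p => p i)
            · intro p hp
              simp only [Finset.mem_coe, mem_filter, hcubeF, mem_image, mem_univ, true_and] at hp
              obtain ⟨⟨b, rfl⟩, _⟩ := hp
              simp only [pt_apply]
              cases b i <;> simp
            · intro p hp q hq hpq
              simp only [coe_filter, Set.mem_setOf_eq] at hp hq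
              obtain ⟨_, t, rfl⟩ := hp
              obtain ⟨_, s, rfl⟩ := hq
              have hpq' : a i + t * v i = a i + s * v i := hpq
              have hts : t = s := mul_right_cancel₀ hi (by linarith : t * v i = s * v i)
              rw [hts]
        _ = 2 := h01
    have : cubeF.card ≤ 2 * m := by
      calc cubeF.card ≤ (𝓛.biUnion fun L => cubeF.filter (· ∈ L)).card :=
            Finset.card_le_card hsub
        _ ≤ ∑ L ∈ 𝓛, (cubeF.filter (· ∈ L)).card := Finset.card_biUnion_le
        _ ≤ ∑ L ∈ 𝓛, 2 := Finset.sum_le_sum hbound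
        _ = 2 * m := by rw [Finset.sum_const, hcard]; ring
    rw [hcubeF_card, pow_eq] at this
    have h2 : 2 ^ (d - 1) * 2 ≤ m * 2 := by linarith
    exact Nat.le_of_mul_le_mul_right h2 (by norm_num)
end

section
/- Any skew line (a line not parallel to the x-axis or y-axis) contains at most 2 points of the boundary of the n×n grid, and consequently at least 2n−2 skew lines are needed to cover the n×n grid for n ≥ 2. -/
private lemma scalar_mid {N a v s t u x y z : ℝ} (hv : v ≠ 0)
    (hst : s < t) (htu : t < u)
    (hx : x = a + s * v) (hy : y = a + t * v) (hz : z = a + u * v)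
    (h1 : 1 ≤ x) (h2 : x ≤ N) (h3 : 1 ≤ z) (h4 : z ≤ N) :
    1 < y ∧ y < N := by
  rcases hv.lt_or_gt with h | h
  · constructor <;> nlinarith
  · constructor <;> nlinarith

/-- A skew line contains at most 2 boundary points of the n×n grid, and
consequently at least 2n−2 skew lines are needed to cover the n×n grid. -/
theorem skew_lines_lower_bound
    (n : ℕ) (hn : 2 ≤ n)
    (grid boundary : Set (ℝ × ℝ))
    (hgrid : grid = {p | ∃ a b : ℕ, 1 ≤ a ∧ a ≤ n ∧ 1 ≤ b ∧ b ≤ n ∧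
      p = ((a : ℝ), (b : ℝ))})
    (hboundary : boundary = {p ∈ grid |
      p.1 = 1 ∨ p.1 = (n : ℝ) ∨ p.2 = 1 ∨ p.2 = (n : ℝ)})
    (IsSkewLine : Set (ℝ × ℝ) → Prop)
    (hSkew : ∀ L, IsSkewLine L ↔ ∃ (a v : ℝ × ℝ), v.1 ≠ 0 ∧ v.2 ≠ 0 ∧
      L = {p | ∃ t : ℝ, p = a + t • v}) :
    (∀ L, IsSkewLine L → (L ∩ boundary).ncard ≤ 2) ∧
    (∀ 𝓛 : Finset (Set (ℝ × ℝ)), (∀ L ∈ 𝓛, IsSkewLine L) →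
      (∀ p ∈ grid, ∃ L ∈ 𝓛, p ∈ L) → 2 * n - 2 ≤ 𝓛.card) := by
  -- box and edge properties of boundary points
  have hbox : ∀ p ∈ boundary, (1 ≤ p.1 ∧ p.1 ≤ (n:ℝ) ∧ 1 ≤ p.2 ∧ p.2 ≤ (n:ℝ)) ∧
      (p.1 = 1 ∨ p.1 = (n:ℝ) ∨ p.2 = 1 ∨ p.2 = (n:ℝ)) := by
    intro p hp
    rw [hboundary] at hp
    obtain ⟨hg, he⟩ := hp
    rw [hgrid] at hg
    obtain ⟨a, b, ha1, ha2, hb1, hb2, rfl⟩ := hg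
    refine ⟨⟨?_, ?_, ?_, ?_⟩, he⟩ <;> simp <;> [exact_mod_cast ha1; exact_mod_cast ha2;
      exact_mod_cast hb1; exact_mod_cast hb2]
  -- the natural-number boundary finset and its real image
  classical
  set Bf : Finset (ℕ × ℕ) := (Finset.Icc 1 n ×ˢ Finset.Icc 1 n).filter
    (fun q => q.1 = 1 ∨ q.1 = n ∨ q.2 = 1 ∨ q.2 = n) with hBf
  set Bfin : Finset (ℝ × ℝ) := Bf.image (fun q => ((q.1 : ℝ), (q.2 : ℝ))) with hBfin
  have hBfin_eq : (Bfin : Set (ℝ × ℝ)) = boundary := by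
    ext p
    simp only [hBfin, hBf, Finset.coe_image, Finset.coe_filter, Finset.mem_product,
      Finset.mem_Icc, Set.mem_image, Set.mem_setOf_eq, hboundary, hgrid, Set.mem_setOf_eq]
    constructor
    · rintro ⟨⟨a, b⟩, ⟨⟨⟨ha1, ha2⟩, hb1, hb2⟩, he⟩, rfl⟩
      refine ⟨⟨a, b, ha1, ha2, hb1, hb2, rfl⟩, ?_⟩
      simp only
      rcases he with h | h | h | h
      · exact Or.inl (by exact_mod_cast congrArg (Nat.cast : ℕ → ℝ) h)
      · exact Or.inr (Or.inl (by exact_mod_cast congrArg (Nat.cast : ℕ → ℝ) h))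
      · exact Or.inr (Or.inr (Or.inl (by exact_mod_cast congrArg (Nat.cast : ℕ → ℝ) h)))
      · exact Or.inr (Or.inr (Or.inr (by exact_mod_cast congrArg (Nat.cast : ℕ → ℝ) h)))
    · rintro ⟨⟨a, b, ha1, ha2, hb1, hb2, rfl⟩, he⟩
      refine ⟨(a, b), ⟨⟨⟨ha1, ha2⟩, hb1, hb2⟩, ?_⟩, rfl⟩
      simp only at he
      rcases he with h | h | h | h
      · exact Or.inl (by exact_mod_cast h)
      · exact Or.inr (Or.inl (by exact_mod_cast h))
      · exact Or.inr (Or.inr (Or.inl (by exact_mod_cast h)))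
      · exact Or.inr (Or.inr (Or.inr (by exact_mod_cast h)))
  have hbdryfin : boundary.Finite := by
    rw [← hBfin_eq]; exact Bfin.finite_toSet
  -- Part 1
  have part1 : ∀ L, IsSkewLine L → (L ∩ boundary).ncard ≤ 2 := by
    intro L hL
    obtain ⟨a, v, hv1, hv2, rfl⟩ := (hSkew L).mp hL
    by_contra hcon
    push_neg at hcon
    have hfin : ({p | ∃ t : ℝ, p = a + t • v} ∩ boundary).Finite :=
      hbdryfin.subset Set.inter_subset_right
    rw [Set.two_lt_ncard hfin] at hcon
    obtain ⟨p, hp, q, hq, r, hr, hpq, hpr, hqr⟩ := hcon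
    obtain ⟨⟨tp, hpt⟩, hpb⟩ := hp
    obtain ⟨⟨tq, hqt⟩, hqb⟩ := hq
    obtain ⟨⟨tr, hrt⟩, hrb⟩ := hr
    -- key: three distinct boundary points with ordered parameters give contradiction
    have key : ∀ s t u : ℝ, s < t → t < u →
        (a + s • v) ∈ boundary → (a + t • v) ∈ boundary → (a + u • v) ∈ boundary → False := by
      intro s t u hst htu hs ht hu
      obtain ⟨⟨hs1, hs2, hs3, hs4⟩, _⟩ := hbox _ hs
      obtain ⟨_, hedge⟩ := hbox _ ht
      obtain ⟨⟨hu1, hu2, hu3, hu4⟩, _⟩ := hbox _ hu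
      have e1 : ∀ w : ℝ, (a + w • v).1 = a.1 + w * v.1 := by intro w; simp
      have e2 : ∀ w : ℝ, (a + w • v).2 = a.2 + w * v.2 := by intro w; simp
      have h1 := scalar_mid (N := (n:ℝ)) hv1 hst htu (e1 s) (e1 t) (e1 u) hs1 hs2 hu1 hu2
      have h2 := scalar_mid (N := (n:ℝ)) hv2 hst htu (e2 s) (e2 t) (e2 u) hs3 hs4 hu3 hu4
      rcases hedge with h | h | h | h
      · exact absurd h (by rw [e1 t]; rw [e1 t] at h1; linarith [h1.1])
      · exact absurd h (by rw [e1 t]; rw [e1 t] at h1; linarith [h1.2])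
      · exact absurd h (by rw [e2 t]; rw [e2 t] at h2; linarith [h2.1])
      · exact absurd h (by rw [e2 t]; rw [e2 t] at h2; linarith [h2.2])
    subst hpt hqt hrt
    have d1 : tp ≠ tq := fun h => hpq (by rw [h])
    have d2 : tp ≠ tr := fun h => hpr (by rw [h])
    have d3 : tq ≠ tr := fun h => hqr (by rw [h])
    rcases d1.lt_or_gt with h1 | h1 <;> rcases d2.lt_or_gt with h2 | h2 <;>
      rcases d3.lt_or_gt with h3 | h3
    · exact key _ _ _ h1 h3 hpb hqb hrb
    · exact key _ _ _ h2 h3 hpb hrb hqb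
    · linarith
    · exact key _ _ _ h2 h1 hrb hpb hqb
    · exact key _ _ _ h1 h2 hqb hpb hrb
    · linarith
    · exact key _ _ _ h3 h2 hqb hrb hpb
    · exact key _ _ _ h3 h1 hrb hqb hpb
  refine ⟨part1, ?_⟩
  -- Part 2
  intro 𝓛 hskew hcover
  obtain ⟨m, rfl⟩ : ∃ m, n = m + 2 := ⟨n - 2, by omega⟩
  set n := m + 2
  -- card of Bf
  have hT : (Finset.Icc 1 n ×ˢ Finset.Icc 1 n).filter
      (fun q : ℕ × ℕ => ¬(q.1 = 1 ∨ q.1 = n ∨ q.2 = 1 ∨ q.2 = n)) =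
      Finset.Icc 2 (n-1) ×ˢ Finset.Icc 2 (n-1) := by
    ext ⟨a, b⟩
    simp only [Finset.mem_filter, Finset.mem_product, Finset.mem_Icc]
    omega
  have hcardBf : Bf.card = 4 * m + 4 := by
    have h := Finset.card_filter_add_card_filter_not
      (s := Finset.Icc 1 n ×ˢ Finset.Icc 1 n)
      (fun q : ℕ × ℕ => q.1 = 1 ∨ q.1 = n ∨ q.2 = 1 ∨ q.2 = n)
    rw [hT] at h
    simp only [Finset.card_product, Nat.card_Icc] at h
    rw [← hBf] at h
    have : n + 1 - 1 = m + 2 := by omega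
    have : n - 1 + 1 - 2 = m := by omega
    simp only [show n + 1 - 1 = m + 2 from by omega, show n - 1 + 1 - 2 = m from by omega] at h
    nlinarith [h]
  have hcardBfin : Bfin.card = 4 * m + 4 := by
    rw [hBfin, Finset.card_image_of_injective _ ?_, hcardBf]
    intro x y hxy
    have h1 : (x.1 : ℝ) = y.1 := congrArg Prod.fst hxy
    have h2 : (x.2 : ℝ) = y.2 := congrArg Prod.snd hxy
    exact Prod.ext (by exact_mod_cast h1) (by exact_mod_cast h2)
  -- assign to each boundary point a covering line
  have hchoose : ∀ p ∈ Bfin, ∃ L ∈ 𝓛, p ∈ L := by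
    intro p hp
    have : p ∈ boundary := by rw [← hBfin_eq]; exact hp
    rw [hboundary] at this
    exact hcover p this.1
  choose! f hf1 hf2 using hchoose
  have hmain : Bfin.card ≤ 2 * (Bfin.image f).card := by
    apply Finset.card_le_mul_card_image
    intro L hL
    obtain ⟨p0, hp0, rfl⟩ := Finset.mem_image.mp hL
    have hsub : ((Bfin.filter (fun a => f a = f p0)) : Set (ℝ × ℝ)) ⊆ f p0 ∩ boundary := by
      intro q hq
      simp only [Finset.coe_filter, Set.mem_setOf_eq] at hq
      exact ⟨hq.2 ▸ hf2 q hq.1, by rw [← hBfin_eq]; exact hq.1⟩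
    calc (Bfin.filter (fun a => f a = f p0)).card
        = ((Bfin.filter (fun a => f a = f p0)) : Set (ℝ × ℝ)).ncard := by
          rw [Set.ncard_coe_finset]
      _ ≤ ((f p0 ∩ boundary)).ncard := Set.ncard_le_ncard hsub
          (hbdryfin.subset Set.inter_subset_right)
      _ ≤ 2 := part1 _ (hskew _ (hf1 p0 hp0))
  have himg : (Bfin.image f).card ≤ 𝓛.card := by
    apply Finset.card_le_card
    intro L hL
    obtain ⟨p0, hp0, rfl⟩ := Finset.mem_image.mp hL
    exact hf1 p0 hp0
  omega
end

section
/- The minimum number of algebraic plane curves of degree at most k needed to cover the n×n grid is exactly ⌈n/k⌉. -/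
open MvPolynomial

noncomputable def pmapAux (f : MvPolynomial (Fin 2) ℝ) (b : ℝ) : Polynomial ℝ :=
  Polynomial.map (MvPolynomial.eval (fun _ : Fin 1 => b)) (MvPolynomial.finSuccEquiv ℝ 1 f)

lemma eval_pmapAux (f : MvPolynomial (Fin 2) ℝ) (a b : ℝ) :
    MvPolynomial.eval (fun i : Fin 2 => if i = 0 then a else b) f
      = Polynomial.eval a (pmapAux f b) := by
  have hfun : (fun i : Fin 2 => if i = 0 then a else b) = Fin.cons a (fun _ : Fin 1 => b) := by
    funext i
    refine Fin.cases ?_ (fun j => ?_) i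
    · simp
    · simp [Fin.succ_ne_zero]
  rw [pmapAux, hfun, MvPolynomial.eval_eq_eval_mv_eval']

lemma natDegree_pmapAux {k : ℕ} (f : MvPolynomial (Fin 2) ℝ) (hf : f.totalDegree ≤ k) (b : ℝ) :
    (pmapAux f b).natDegree ≤ k :=
  le_trans Polynomial.natDegree_map_le (by
    rw [MvPolynomial.natDegree_finSuccEquiv]
    exact le_trans (MvPolynomial.degreeOf_le_totalDegree f 0) hf)

lemma exists_poly_aux {k : ℕ} (f : MvPolynomial (Fin 2) ℝ) (hf0 : f ≠ 0)
    (hfd : f.totalDegree ≤ k) :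
    ∃ g : Polynomial ℝ, g ≠ 0 ∧ g.natDegree ≤ k ∧
      ∀ b : ℝ, pmapAux f b = 0 → g.eval b = 0 := by
  have hE : MvPolynomial.finSuccEquiv ℝ 1 f ≠ 0 := by
    intro h
    apply hf0
    have := congrArg (MvPolynomial.finSuccEquiv ℝ 1).symm h
    simpa using this
  obtain ⟨i, hi⟩ : ∃ i, (MvPolynomial.finSuccEquiv ℝ 1 f).coeff i ≠ 0 := by
    by_contra h
    push_neg at h
    exact hE (Polynomial.ext fun j => by simpa using h j)
  set c := (MvPolynomial.finSuccEquiv ℝ 1 f).coeff i with hc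
  have hcd : c.totalDegree ≤ k :=
    le_trans (le_trans (Nat.le_add_right _ i)
      (MvPolynomial.totalDegree_coeff_finSuccEquiv_add_le f i hi)) hfd
  have hinj : Function.Injective (MvPolynomial.eval (fun x : Fin 0 => (0:ℝ))) := by
    intro x y hxy
    obtain ⟨x', rfl⟩ := MvPolynomial.C_surjective (Fin 0) x
    obtain ⟨y', rfl⟩ := MvPolynomial.C_surjective (Fin 0) y
    simp only [MvPolynomial.eval_C] at hxy
    rw [hxy]
  refine ⟨Polynomial.map (MvPolynomial.eval (fun x : Fin 0 => (0:ℝ)))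
    (MvPolynomial.finSuccEquiv ℝ 0 c), ?_, ?_, ?_⟩
  · rw [Ne, Polynomial.map_eq_zero_iff hinj]
    intro h
    apply hi
    have := congrArg (MvPolynomial.finSuccEquiv ℝ 0).symm h
    simpa using this
  · exact le_trans Polynomial.natDegree_map_le (by
      rw [MvPolynomial.natDegree_finSuccEquiv]
      exact le_trans (MvPolynomial.degreeOf_le_totalDegree c 0) hcd)
  · intro b hb
    have h1 : (MvPolynomial.eval (fun _ : Fin 1 => b)) c = 0 := by
      have := congrArg (fun p => Polynomial.coeff p i) hb
      simpa [pmapAux, Polynomial.coeff_map, ← hc] using this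
    have h2 : (fun _ : Fin 1 => b) = Fin.cons b (fun x : Fin 0 => (0:ℝ)) := by
      funext j
      refine Fin.cases ?_ (fun x => x.elim0) j
      simp
    rw [h2, MvPolynomial.eval_eq_eval_mv_eval'] at h1
    exact h1

lemma count_aux (n k : ℕ) (F : Finset (MvPolynomial (Fin 2) ℝ))
    (g : MvPolynomial (Fin 2) ℝ → Polynomial ℝ)
    (hdeg : ∀ f ∈ F, (g f).natDegree ≤ k)
    (hcov : ∀ c : ℕ, 1 ≤ c → c ≤ n → ∃ f ∈ F, g f ≠ 0 ∧ (g f).eval (c : ℝ) = 0) :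
    n ≤ F.card * k := by
  have h1 : (Finset.Icc 1 n).card ≤ (F.biUnion fun f => (g f).roots.toFinset).card := by
    apply Finset.card_le_card_of_injOn (fun c : ℕ => (c : ℝ))
    · intro c hc
      simp only [Finset.mem_coe, Finset.mem_Icc] at hc
      obtain ⟨f, hfF, hf0, hfe⟩ := hcov c hc.1 hc.2
      have : (c : ℝ) ∈ F.biUnion fun f => (g f).roots.toFinset := by
        rw [Finset.mem_biUnion]
        exact ⟨f, hfF, Multiset.mem_toFinset.mpr (Polynomial.mem_roots'.mpr ⟨hf0, hfe⟩)⟩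
      exact this
    · intro x _ y _ h
      exact Nat.cast_injective h
  calc n = (Finset.Icc 1 n).card := by rw [Nat.card_Icc]; omega
    _ ≤ _ := h1
    _ ≤ ∑ f ∈ F, ((g f).roots.toFinset).card := Finset.card_biUnion_le
    _ ≤ ∑ _f ∈ F, k := Finset.sum_le_sum (fun f hf =>
        le_trans (Multiset.toFinset_card_le _) (le_trans (Polynomial.card_roots' _) (hdeg f hf)))
    _ = F.card * k := by rw [Finset.sum_const, smul_eq_mul]

lemma lower_bound_aux (n k : ℕ) (F : Finset (MvPolynomial (Fin 2) ℝ))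
    (hne : ∀ f ∈ F, f ≠ 0) (hdeg : ∀ f ∈ F, f.totalDegree ≤ k)
    (hcov : ∀ a b : ℕ, 1 ≤ a → a ≤ n → 1 ≤ b → b ≤ n →
      ∃ f ∈ F, MvPolynomial.eval
        (fun i : Fin 2 => if i = 0 then (a : ℝ) else (b : ℝ)) f = 0) :
    n ≤ F.card * k := by
  by_cases hB : ∀ b : ℕ, 1 ≤ b → b ≤ n → ∃ f ∈ F, pmapAux f (b : ℝ) = 0
  · have hg : ∀ f : MvPolynomial (Fin 2) ℝ, ∃ g : Polynomial ℝ,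
        f ∈ F → (g ≠ 0 ∧ g.natDegree ≤ k ∧ ∀ b : ℝ, pmapAux f b = 0 → g.eval b = 0) := by
      intro f
      by_cases hf : f ∈ F
      · obtain ⟨g, h⟩ := exists_poly_aux f (hne f hf) (hdeg f hf)
        exact ⟨g, fun _ => h⟩
      · exact ⟨1, fun h => absurd h hf⟩
    choose g hg using hg
    refine count_aux n k F g (fun f hf => (hg f hf).2.1) ?_
    intro b hb1 hb2
    obtain ⟨f, hfF, hpf⟩ := hB b hb1 hb2
    exact ⟨f, hfF, (hg f hfF).1, (hg f hfF).2.2 _ hpf⟩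
  · push_neg at hB
    obtain ⟨b, hb1, hb2, hbf⟩ := hB
    refine count_aux n k F (fun f => pmapAux f (b : ℝ))
      (fun f hf => natDegree_pmapAux f (hdeg f hf) _) ?_
    intro a ha1 ha2
    obtain ⟨f, hfF, hfe⟩ := hcov a b ha1 ha2 hb1 hb2
    rw [eval_pmapAux] at hfe
    exact ⟨f, hfF, hbf f hfF, hfe⟩

noncomputable def curveAux (k j : ℕ) : MvPolynomial (Fin 2) ℝ :=
  ∏ i ∈ Finset.Ioc (j * k) (j * k + k), (MvPolynomial.X 0 - MvPolynomial.C (i : ℝ))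

lemma eval_curveAux (k j : ℕ) (v : Fin 2 → ℝ) :
    MvPolynomial.eval v (curveAux k j)
      = ∏ i ∈ Finset.Ioc (j * k) (j * k + k), (v 0 - (i : ℝ)) := by
  simp [curveAux]

lemma curveAux_ne_zero (k j : ℕ) : curveAux k j ≠ 0 := by
  intro h
  have h0 := eval_curveAux k j (fun _ => 0)
  rw [h] at h0
  simp only [map_zero] at h0
  obtain ⟨i, hi, h1⟩ := Finset.prod_eq_zero_iff.mp h0.symm
  simp only [Finset.mem_Ioc] at hi
  have : (i : ℝ) = 0 := by linarith [sub_eq_zero.mp h1]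
  have : i = 0 := Nat.cast_eq_zero.mp this
  omega

lemma curveAux_totalDegree (k j : ℕ) : (curveAux k j).totalDegree ≤ k := by
  refine le_trans (MvPolynomial.totalDegree_finset_prod _ _) ?_
  refine le_trans (Finset.sum_le_sum (g := fun _ => 1) (fun i _ => ?_)) ?_
  · refine le_trans (MvPolynomial.totalDegree_sub _ _) (max_le ?_ ?_)
    · exact le_of_eq (MvPolynomial.totalDegree_X _)
    · exact le_trans (le_of_eq (MvPolynomial.totalDegree_C _)) (Nat.zero_le 1)
  · simp [Nat.card_Ioc]

/-- The minimum number of algebraic plane curves of degree at most k needed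
to cover the n×n grid is exactly ⌈n/k⌉. -/
theorem min_algebraic_curves_cover
    (n k : ℕ) (hn : 1 ≤ n) (hk : 1 ≤ k) :
    IsLeast {m : ℕ | ∃ F : Finset (MvPolynomial (Fin 2) ℝ),
        F.card = m ∧ (∀ f ∈ F, f ≠ 0) ∧ (∀ f ∈ F, f.totalDegree ≤ k) ∧
        ∀ a b : ℕ, 1 ≤ a → a ≤ n → 1 ≤ b → b ≤ n →
          ∃ f ∈ F, MvPolynomial.eval
            (fun i : Fin 2 => if i = 0 then (a : ℝ) else (b : ℝ)) f = 0}
      ⌈(n : ℚ) / (k : ℚ)⌉₊ := by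
  set c := ⌈(n : ℚ) / (k : ℚ)⌉₊ with hcdef
  have hkQ : (0 : ℚ) < (k : ℚ) := by exact_mod_cast hk
  have hnck : n ≤ c * k := by
    have h := Nat.le_ceil ((n : ℚ) / (k : ℚ))
    rw [div_le_iff₀ hkQ] at h
    exact_mod_cast h
  constructor
  · -- membership
    refine ⟨(Finset.range c).image (curveAux k), ?_, ?_, ?_, ?_⟩
    · rw [Finset.card_image_of_injOn, Finset.card_range]
      intro j1 h1 j2 h2 hEq
      by_contra hne'
      set v : Fin 2 → ℝ := fun i => if i = 0 then ((j1 * k + 1 : ℕ) : ℝ) else 0 with hv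
      have e1 : MvPolynomial.eval v (curveAux k j1) = 0 := by
        rw [eval_curveAux]
        refine Finset.prod_eq_zero (i := j1 * k + 1) ?_ ?_
        · simp only [Finset.mem_Ioc]
          omega
        · simp [hv]
      have e2 : MvPolynomial.eval v (curveAux k j2) ≠ 0 := by
        rw [eval_curveAux]
        rw [Finset.prod_ne_zero_iff]
        intro i hi
        simp only [Finset.mem_Ioc] at hi
        have hne2 : j1 * k + 1 ≠ i := by
          rcases Nat.lt_or_ge j1 j2 with h | h
          · have hm : (j1 + 1) * k ≤ j2 * k := Nat.mul_le_mul_right k h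
            have : (j1 + 1) * k = j1 * k + k := by ring
            omega
          · have h' : j2 < j1 := lt_of_le_of_ne h (fun he => hne' he.symm)
            have hm : (j2 + 1) * k ≤ j1 * k := Nat.mul_le_mul_right k h'
            have : (j2 + 1) * k = j2 * k + k := by ring
            omega
        simp only [hv, if_pos rfl]
        rw [sub_ne_zero]
        exact fun hcast => hne2 (Nat.cast_injective hcast)
      rw [hEq] at e1
      exact e2 e1
    · intro f hf
      obtain ⟨j, _, rfl⟩ := Finset.mem_image.mp hf
      exact curveAux_ne_zero k j
    · intro f hf
      obtain ⟨j, _, rfl⟩ := Finset.mem_image.mp hf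
      exact curveAux_totalDegree k j
    · intro a b ha1 ha2 hb1 hb2
      set j := (a - 1) / k with hj
      have hjc : j < c := by
        have h1 : a - 1 < c * k := lt_of_lt_of_le (by omega) hnck
        exact (Nat.div_lt_iff_lt_mul (by omega)).mpr h1
      refine ⟨curveAux k j, Finset.mem_image_of_mem _ (Finset.mem_range.mpr hjc), ?_⟩
      rw [eval_curveAux]
      refine Finset.prod_eq_zero (i := a) ?_ ?_
      · have hd : j * k + (a - 1) % k = a - 1 := by
          rw [hj, mul_comm]
          exact Nat.div_add_mod (a - 1) k
        have hm : (a - 1) % k < k := Nat.mod_lt _ (by omega)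
        simp only [Finset.mem_Ioc]
        omega
      · simp
  · -- lower bound
    rintro m ⟨F, hcard, h1, h2, h3⟩
    rw [← hcard, hcdef, Nat.ceil_le, div_le_iff₀ hkQ]
    have := lower_bound_aux n k F h1 h2 h3
    exact_mod_cast this
end

section
/- At least ⌈n/2⌉ closed convex curves are required to cover all points of the n×n grid; that is, if k boundaries of compact convex sets cover {1,...,n}², then k ≥ n/2. -/
lemma combo_mem {K : Set (ℝ × ℝ)} (hK : Convex ℝ K) {x₁ x₂ c : ℝ}
    (h1 : ((x₁, c) : ℝ × ℝ) ∈ K) (h2 : ((x₂, c) : ℝ × ℝ) ∈ K)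
    (hx : x₁ < x₂) {u w : ℝ × ℝ} (hu : u ∈ K) {t : ℝ}
    (ht0 : 0 ≤ t) (ht : t ≤ 1/2)
    (hteq : (1 - t) * c + t * u.2 = w.2)
    (hs1 : x₁ * (1 - t) ≤ w.1 - t * u.1) (hs2 : w.1 - t * u.1 ≤ x₂ * (1 - t)) :
    w ∈ K := by
  have h1t : (0:ℝ) < 1 - t := by linarith
  set s : ℝ := (w.1 - t * u.1) / (1 - t) with hs
  have hsx1 : x₁ ≤ s := (le_div_iff₀ h1t).mpr hs1
  have hsx2 : s ≤ x₂ := (div_le_iff₀ h1t).mpr hs2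
  have hxx : (0:ℝ) < x₂ - x₁ := by linarith
  set lam : ℝ := (s - x₁) / (x₂ - x₁) with hlam
  have hl0 : 0 ≤ lam := div_nonneg (by linarith) hxx.le
  have hl1 : lam ≤ 1 := (div_le_one hxx).mpr (by linarith)
  have hsc : ((s, c) : ℝ × ℝ) ∈ K := by
    have hmem := hK h1 h2 (by linarith : (0:ℝ) ≤ 1 - lam) hl0 (by ring)
    have key : (1 - lam) • ((x₁, c) : ℝ × ℝ) + lam • ((x₂, c) : ℝ × ℝ) = (s, c) := by
      apply Prod.ext <;> simp [Prod.smul_mk, Prod.ext_iff, hlam]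
      · field_simp
        ring
      · ring
    rwa [key] at hmem
  have key2 : (1 - t) • ((s, c) : ℝ × ℝ) + t • u = w := by
    apply Prod.ext
    · simp [hs]
      field_simp
      ring
    · simpa using hteq
  have := hK hsc hu h1t.le ht0 (by ring)
  rwa [key2] at this

lemma slice_mem {K : Set (ℝ × ℝ)} (hK : Convex ℝ K) {x₁ x₀ x₂ c δ : ℝ}
    (h1 : ((x₁, c) : ℝ × ℝ) ∈ K) (h2 : ((x₂, c) : ℝ × ℝ) ∈ K)
    (hδ : 0 < δ) (hδ1 : δ ≤ x₀ - x₁) (hδ2 : δ ≤ x₂ - x₀)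
    {u w : ℝ × ℝ} (hu : u ∈ K) {t : ℝ} (ht0 : 0 ≤ t) (ht : t ≤ 1/2)
    (htC : t * (|x₀ - u.1| + δ) ≤ δ/4)
    (hw1 : |w.1 - x₀| ≤ δ/2)
    (hty : (1 - t) * c + t * u.2 = w.2) : w ∈ K := by
  have hx : x₁ < x₂ := by linarith
  have hA1 : x₀ - u.1 ≤ |x₀ - u.1| := le_abs_self _
  have hA2 : -(|x₀ - u.1|) ≤ x₀ - u.1 := neg_abs_le _
  have hA0 : 0 ≤ |x₀ - u.1| := abs_nonneg _
  have hw1a : w.1 - x₀ ≤ δ/2 := le_trans (le_abs_self _) hw1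
  have hw1b : -(δ/2) ≤ w.1 - x₀ := le_trans (neg_le_neg hw1) (neg_abs_le _)
  have e1 : t * (-(|x₀ - u.1|)) ≤ t * (x₀ - u.1) := mul_le_mul_of_nonneg_left hA2 ht0
  have e1' : t * (x₀ - u.1) ≤ t * |x₀ - u.1| := mul_le_mul_of_nonneg_left hA1 ht0
  apply combo_mem hK h1 h2 hx hu ht0 ht hty
  · nlinarith [mul_le_mul_of_nonneg_right (show x₁ ≤ x₀ - δ by linarith) (show (0:ℝ) ≤ 1 - t by linarith)]
  · nlinarith [mul_le_mul_of_nonneg_right (show x₀ + δ ≤ x₂ by linarith) (show (0:ℝ) ≤ 1 - t by linarith)]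

lemma three_interior {K : Set (ℝ × ℝ)} (hK : Convex ℝ K) {x₁ x₀ x₂ c : ℝ}
    (h1 : ((x₁, c) : ℝ × ℝ) ∈ K) (h2 : ((x₂, c) : ℝ × ℝ) ∈ K)
    (ha : x₁ < x₀) (hb : x₀ < x₂)
    {u v : ℝ × ℝ} (hu : u ∈ K) (hv : v ∈ K) (hu2 : c < u.2) (hv2 : v.2 < c) :
    ((x₀, c) : ℝ × ℝ) ∈ interior K := by
  set δ : ℝ := min (x₀ - x₁) (x₂ - x₀) with hδdef
  have hδ : 0 < δ := lt_min (by linarith) (by linarith)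
  have hδ1 : δ ≤ x₀ - x₁ := min_le_left _ _
  have hδ2 : δ ≤ x₂ - x₀ := min_le_right _ _
  set Cu : ℝ := |x₀ - u.1| + δ with hCu
  set Cv : ℝ := |x₀ - v.1| + δ with hCv
  have hCu0 : 0 < Cu := by positivity
  have hCv0 : 0 < Cv := by positivity
  set εu : ℝ := (u.2 - c) * min (1/2) (δ/(4*Cu)) with hεu
  set εv : ℝ := (c - v.2) * min (1/2) (δ/(4*Cv)) with hεv
  have hεu0 : 0 < εu := by
    apply mul_pos (by linarith) (lt_min (by norm_num) (by positivity))
  have hεv0 : 0 < εv := by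
    apply mul_pos (by linarith) (lt_min (by norm_num) (by positivity))
  set ε : ℝ := min (δ/2) (min εu εv) with hε
  have hε0 : 0 < ε := lt_min (by positivity) (lt_min hεu0 hεv0)
  rw [mem_interior]
  refine ⟨Metric.ball ((x₀, c) : ℝ × ℝ) ε, ?_, Metric.isOpen_ball, Metric.mem_ball_self hε0⟩
  intro w hw
  rw [Metric.mem_ball, Prod.dist_eq, sup_lt_iff, Real.dist_eq, Real.dist_eq] at hw
  obtain ⟨hwx, hwy⟩ := hw
  have hεδ : ε ≤ δ/2 := min_le_left _ _
  have hwx' : |w.1 - x₀| ≤ δ/2 := le_trans hwx.le hεδ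
  rcases le_or_gt c w.2 with hcw | hcw
  · -- upper case, use u
    set t : ℝ := (w.2 - c)/(u.2 - c) with htdef
    have hu2' : (0:ℝ) < u.2 - c := by linarith
    have ht0 : 0 ≤ t := div_nonneg (by linarith) hu2'.le
    have htb : t ≤ min (1/2) (δ/(4*Cu)) := by
      rw [div_le_iff₀ hu2']
      calc w.2 - c ≤ |w.2 - c| := le_abs_self _
        _ ≤ εu := le_trans hwy.le (le_trans (min_le_right _ _) (min_le_left _ _))
        _ = min (1/2) (δ/(4*Cu)) * (u.2 - c) := by rw [hεu]; ring
    have ht : t ≤ 1/2 := le_trans htb (min_le_left _ _)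
    have htC : t * Cu ≤ δ/4 := by
      have := le_trans htb (min_le_right _ _)
      rw [le_div_iff₀ (by positivity : (0:ℝ) < 4*Cu)] at this
      nlinarith
    apply slice_mem hK h1 h2 hδ hδ1 hδ2 hu ht0 ht htC hwx'
    have hmul : t * (u.2 - c) = w.2 - c := by
      rw [htdef, div_mul_eq_mul_div, mul_div_assoc, div_self (by linarith : u.2 - c ≠ 0), mul_one]
    linarith
  · -- lower case, use v
    set t : ℝ := (w.2 - c)/(v.2 - c) with htdef
    have hv2' : (0:ℝ) < c - v.2 := by linarith
    have ht0 : 0 ≤ t := div_nonneg_of_nonpos (by linarith) (by linarith)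
    have htb : t ≤ min (1/2) (δ/(4*Cv)) := by
      have : t = (c - w.2)/(c - v.2) := by rw [htdef]; rw [div_eq_div_iff (by linarith) (by linarith)]; ring
      rw [this, div_le_iff₀ hv2']
      calc c - w.2 ≤ |w.2 - c| := by rw [abs_sub_comm]; exact le_abs_self _
        _ ≤ εv := le_trans hwy.le (le_trans (min_le_right _ _) (min_le_right _ _))
        _ = min (1/2) (δ/(4*Cv)) * (c - v.2) := by rw [hεv]; ring
    have ht : t ≤ 1/2 := le_trans htb (min_le_left _ _)
    have htC : t * Cv ≤ δ/4 := by
      have := le_trans htb (min_le_right _ _)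
      rw [le_div_iff₀ (by positivity : (0:ℝ) < 4*Cv)] at this
      nlinarith
    apply slice_mem hK h1 h2 hδ hδ1 hδ2 hv ht0 ht htC hwx'
    have hmul : t * (v.2 - c) = w.2 - c := by
      rw [htdef, div_mul_eq_mul_div, mul_div_assoc, div_self (by linarith : v.2 - c ≠ 0), mul_one]
    linarith

lemma bad_row_halfplane {K : Set (ℝ × ℝ)} (hc : IsClosed K) (hK : Convex ℝ K)
    {x₁ x₀ x₂ c : ℝ}
    (h1 : ((x₁, c) : ℝ × ℝ) ∈ frontier K) (h0 : ((x₀, c) : ℝ × ℝ) ∈ frontier K)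
    (h2 : ((x₂, c) : ℝ × ℝ) ∈ frontier K) (ha : x₁ < x₀) (hb : x₀ < x₂) :
    (∀ z ∈ K, z.2 ≤ c) ∨ (∀ z ∈ K, c ≤ z.2) := by
  by_contra h
  push_neg at h
  obtain ⟨⟨u, hu, hu2⟩, ⟨v, hv, hv2⟩⟩ := h
  have hint := three_interior hK (hc.frontier_subset h1) (hc.frontier_subset h2)
    ha hb hu hv hu2 hv2
  exact h0.2 hint

lemma exists_chain3 {s : Finset ℕ} (h : 2 < s.card) :
    ∃ p q r, p ∈ s ∧ q ∈ s ∧ r ∈ s ∧ p < q ∧ q < r := by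
  obtain ⟨a, b, c, ha, hb, hc, hab, hac, hbc⟩ := Finset.two_lt_card_iff.mp h
  rcases hab.lt_or_gt with h1 | h1 <;> rcases hac.lt_or_gt with h2 | h2 <;>
    rcases hbc.lt_or_gt with h3 | h3
  · exact ⟨a, b, c, ha, hb, hc, h1, h3⟩
  · exact ⟨a, c, b, ha, hc, hb, h2, h3⟩
  · omega
  · exact ⟨c, a, b, hc, ha, hb, h2, h1⟩
  · exact ⟨b, a, c, hb, ha, hc, h1, h2⟩
  · omega
  · exact ⟨b, c, a, hb, hc, ha, h3, h2⟩
  · exact ⟨c, b, a, hc, hb, ha, h3, h1⟩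

/-- If k boundaries of compact convex sets cover the n×n grid, then k ≥ n/2. -/
theorem convex_curves_cover_lower_bound
    (n k : ℕ)
    (K : Fin k → Set (ℝ × ℝ))
    (hcompact : ∀ j, IsCompact (K j))
    (hconv : ∀ j, Convex ℝ (K j))
    (hcover : ∀ a b : ℕ, 1 ≤ a → a ≤ n → 1 ≤ b → b ≤ n →
      ∃ j, ((a : ℝ), (b : ℝ)) ∈ frontier (K j)) :
    (n : ℝ) / 2 ≤ (k : ℝ) := by
  by_contra hcon
  push_neg at hcon
  have hkn : 2 * k < n := by
    have h2 : ((2 * k : ℕ) : ℝ) < (n : ℝ) := by push_cast; linarith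
    exact_mod_cast h2
  classical
  set R : Finset ℕ := Finset.Icc 1 n with hRdef
  have hR : R.card = n := by rw [hRdef, Nat.card_Icc]; omega
  set F : Fin k → ℕ → Finset ℕ :=
    fun j b => R.filter (fun a => ((a : ℝ), (b : ℝ)) ∈ frontier (K j)) with hFdef
  -- each curve has at most 2 bad rows
  have hbad2 : ∀ j, (R.filter (fun b => 3 ≤ (F j b).card)).card ≤ 2 := by
    intro j
    by_contra hgt
    rw [not_le] at hgt
    obtain ⟨p, q, r, hp, hq, hr, hpq, hqr⟩ := exists_chain3 hgt
    rw [Finset.mem_filter] at hp hq hr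
    -- three grid points on row q
    obtain ⟨a₁, a₀, a₂, ha₁, ha₀, ha₂, h10, h02⟩ := exists_chain3 (by omega : 2 < (F j q).card)
    rw [hFdef, Finset.mem_filter] at ha₁ ha₀ ha₂
    have hhalf := bad_row_halfplane (hcompact j).isClosed (hconv j)
      ha₁.2 ha₀.2 ha₂.2 (by exact_mod_cast h10) (by exact_mod_cast h02)
    -- a grid point on row p and on row r
    obtain ⟨ap, hap⟩ := Finset.card_pos.mp (by omega : 0 < (F j p).card)
    obtain ⟨ar, har⟩ := Finset.card_pos.mp (by omega : 0 < (F j r).card)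
    rw [hFdef, Finset.mem_filter] at hap har
    have hpmem : ((ap : ℝ), (p : ℝ)) ∈ K j := (hcompact j).isClosed.frontier_subset hap.2
    have hrmem : ((ar : ℝ), (r : ℝ)) ∈ K j := (hcompact j).isClosed.frontier_subset har.2
    rcases hhalf with hle | hge
    · have := hle _ hrmem
      simp only at this
      have : (r : ℝ) ≤ (q : ℝ) := this
      have : r ≤ q := by exact_mod_cast this
      omega
    · have := hge _ hpmem
      simp only at this
      have : (q : ℝ) ≤ (p : ℝ) := this
      have : p ≥ q := by exact_mod_cast this
      omega
  -- total bad rows ≤ 2k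
  have hBad : (R.filter (fun b => ∃ j, 3 ≤ (F j b).card)).card ≤ 2 * k := by
    have hsub : R.filter (fun b => ∃ j, 3 ≤ (F j b).card) ⊆
        Finset.univ.biUnion (fun j : Fin k => R.filter (fun b => 3 ≤ (F j b).card)) := by
      intro b hb
      rw [Finset.mem_filter] at hb
      obtain ⟨j, hj⟩ := hb.2
      exact Finset.mem_biUnion.mpr ⟨j, Finset.mem_univ _, Finset.mem_filter.mpr ⟨hb.1, hj⟩⟩
    calc (R.filter (fun b => ∃ j, 3 ≤ (F j b).card)).card
        ≤ (Finset.univ.biUnion (fun j : Fin k => R.filter (fun b => 3 ≤ (F j b).card))).card :=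
          Finset.card_le_card hsub
      _ ≤ ∑ j : Fin k, (R.filter (fun b => 3 ≤ (F j b).card)).card := Finset.card_biUnion_le
      _ ≤ ∑ _j : Fin k, 2 := Finset.sum_le_sum (fun j _ => hbad2 j)
      _ = 2 * k := by simp [mul_comm]
  -- find a good row b
  have hdiff : 0 < (R \ R.filter (fun b => ∃ j, 3 ≤ (F j b).card)).card := by
    rw [Finset.card_sdiff_of_subset (Finset.filter_subset _ _), hR]
    omega
  obtain ⟨b, hb⟩ := Finset.card_pos.mp hdiff
  rw [Finset.mem_sdiff, Finset.mem_filter] at hb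
  obtain ⟨hbR, hbbad⟩ := hb
  have hgood : ∀ j, (F j b).card ≤ 2 := by
    intro j
    by_contra hj
    exact hbbad ⟨hbR, ⟨j, by omega⟩⟩
  have hbIcc := Finset.mem_Icc.mp hbR
  -- k > 0
  rcases Nat.eq_zero_or_pos k with hk0 | hk0
  · obtain ⟨j, _⟩ := hcover 1 1 le_rfl (by omega) le_rfl (by omega)
    exact (show False from by subst hk0; exact j.elim0)
  -- choose a curve for each point of row b
  have hex : ∀ a ∈ R, ∃ j, ((a : ℝ), (b : ℝ)) ∈ frontier (K j) := by
    intro a ha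
    rw [hRdef, Finset.mem_Icc] at ha
    exact hcover a b ha.1 ha.2 hbIcc.1 hbIcc.2
  set f : ℕ → Fin k := fun a =>
    if h : a ∈ R then Classical.choose (hex a h) else ⟨0, hk0⟩ with hfdef
  have hcard : R.card ≤ 2 * (Finset.univ : Finset (Fin k)).card := by
    apply Finset.card_le_mul_card_image_of_maps_to (fun a _ => Finset.mem_univ (f a))
    intro j _
    have hsubset : R.filter (fun a => f a = j) ⊆ F j b := by
      intro a ha
      rw [Finset.mem_filter] at ha
      obtain ⟨haR, hfa⟩ := ha
      rw [hFdef, Finset.mem_filter]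
      refine ⟨haR, ?_⟩
      have := Classical.choose_spec (hex a haR)
      rwa [show Classical.choose (hex a haR) = j from by
        rw [← hfa, hfdef]; simp [haR]] at this
    exact le_trans (Finset.card_le_card hsubset) (hgood j)
  rw [hR, Finset.card_univ, Fintype.card_fin] at hcard
  omega
end

section
/- The minimum number of closed convex curves needed to cover the m×n grid equals min{⌈m/2⌉, ⌈n/2⌉}. -/
set_option maxHeartbeats 1000000

open Set

/-- If `(a,y1), (a,y3), (p1,p2) ∈ K` convex, and `(x,y)` decomposes suitably, then `(x,y) ∈ K`. -/
lemma combo_mem_s12 {K : Set (ℝ × ℝ)} (hc : Convex ℝ K)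
    {a y1 y3 p1 p2 x y t : ℝ}
    (hA : ((a, y1) : ℝ × ℝ) ∈ K) (hC : ((a, y3) : ℝ × ℝ) ∈ K)
    (hP : ((p1, p2) : ℝ × ℝ) ∈ K) (hy13 : y1 < y3)
    (hp : p1 ≠ a) (ht : t = (x - a) / (p1 - a)) (ht0 : 0 ≤ t) (ht1 : t ≤ 1/2)
    (hv1 : y1 ≤ (y - t * p2) / (1 - t)) (hv3 : (y - t * p2) / (1 - t) ≤ y3) :
    ((x, y) : ℝ × ℝ) ∈ K := by
  have hp' : p1 - a ≠ 0 := sub_ne_zero.mpr hp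
  have h1t : (0:ℝ) < 1 - t := by linarith
  set v := (y - t * p2) / (1 - t) with hv
  set θ := (v - y1) / (y3 - y1) with hθ
  have hy13' : y3 - y1 ≠ 0 := by intro h; linarith
  have hθ0 : 0 ≤ θ := by apply div_nonneg <;> linarith
  have hθ1 : θ ≤ 1 := by rw [div_le_one (by linarith)]; linarith
  have hV : ((a, v) : ℝ × ℝ) ∈ K := by
    have h := hc hA hC (by linarith : (0:ℝ) ≤ 1 - θ) hθ0 (by ring)
    have e : (1 - θ) • ((a, y1) : ℝ × ℝ) + θ • ((a, y3) : ℝ × ℝ) = (a, v) := by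
      simp only [Prod.smul_mk, Prod.mk_add_mk, smul_eq_mul, Prod.mk.injEq]
      constructor
      · ring
      · rw [hθ]; field_simp
        ring
    rwa [e] at h
  have h := hc hV hP (by linarith : (0:ℝ) ≤ 1 - t) ht0 (by ring)
  have e : (1 - t) • ((a, v) : ℝ × ℝ) + t • ((p1, p2) : ℝ × ℝ) = (x, y) := by
    simp only [Prod.smul_mk, Prod.mk_add_mk, smul_eq_mul, Prod.mk.injEq]
    constructor
    · rw [ht]; field_simp; ring
    · rw [hv]; field_simp; ring
  rwa [e] at h

lemma mem_interior_of_three {K : Set (ℝ × ℝ)} (hc : Convex ℝ K)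
    {a y1 y2 y3 p1 p2 q1 q2 : ℝ}
    (hA : ((a, y1) : ℝ × ℝ) ∈ K) (hC : ((a, y3) : ℝ × ℝ) ∈ K)
    (hP : ((p1, p2) : ℝ × ℝ) ∈ K) (hQ : ((q1, q2) : ℝ × ℝ) ∈ K)
    (h12 : y1 < y2) (h23 : y2 < y3) (hq : q1 < a) (hp : a < p1) :
    ((a, y2) : ℝ × ℝ) ∈ interior K := by
  have hpa : (0:ℝ) < p1 - a := by linarith
  have hqa : (0:ℝ) < a - q1 := by linarith
  set d := min (y2 - y1) (y3 - y2) with hd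
  have hd0 : 0 < d := lt_min (by linarith) (by linarith)
  set MP := |y2 - p2| with hMP
  set MQ := |y2 - q2| with hMQ
  have hMP0 : 0 ≤ MP := abs_nonneg _
  have hMQ0 : 0 ≤ MQ := abs_nonneg _
  have hMP' : -MP ≤ y2 - p2 ∧ y2 - p2 ≤ MP := abs_le.mp (le_refl MP)
  have hMQ' : -MQ ≤ y2 - q2 ∧ y2 - q2 ≤ MQ := abs_le.mp (le_refl MQ)
  have hdy1 : d ≤ y2 - y1 := min_le_left _ _
  have hdy3 : d ≤ y3 - y2 := min_le_right _ _
  clear_value d MP MQ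
  have hPden : (0:ℝ) < 2 * ((p1 - a) + MP) := by nlinarith
  have hQden : (0:ℝ) < 2 * ((a - q1) + MQ) := by nlinarith
  set εP := d * (p1 - a) / (2 * ((p1 - a) + MP)) with hεP
  set εQ := d * (a - q1) / (2 * ((a - q1) + MQ)) with hεQ
  have hεP0 : 0 < εP := div_pos (by nlinarith) hPden
  have hεQ0 : 0 < εQ := div_pos (by nlinarith) hQden
  have hkeyP : 2 * εP * ((p1 - a) + MP) = d * (p1 - a) := by
    rw [hεP]; field_simp
  have hkeyQ : 2 * εQ * ((a - q1) + MQ) = d * (a - q1) := by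
    rw [hεQ]; field_simp
  clear_value εP εQ
  set ε := min (min εP εQ) (min ((p1 - a)/2) ((a - q1)/2)) with hε
  have hε0 : 0 < ε :=
    lt_min (lt_min hεP0 hεQ0) (lt_min (by linarith) (by linarith))
  have hεεP : ε ≤ εP := le_trans (min_le_left _ _) (min_le_left _ _)
  have hεεQ : ε ≤ εQ := le_trans (min_le_left _ _) (min_le_right _ _)
  have hεp : ε ≤ (p1 - a)/2 := le_trans (min_le_right _ _) (min_le_left _ _)
  have hεq : ε ≤ (a - q1)/2 := le_trans (min_le_right _ _) (min_le_right _ _)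
  have hkeyP' : 2 * ε * ((p1 - a) + MP) ≤ d * (p1 - a) := by
    rw [← hkeyP]; nlinarith
  have hkeyQ' : 2 * ε * ((a - q1) + MQ) ≤ d * (a - q1) := by
    rw [← hkeyQ]; nlinarith
  clear_value ε
  clear hεP hεQ hkeyP hkeyQ hεεP hεεQ hεP0 hεQ0
  rw [mem_interior]
  refine ⟨Metric.ball ((a, y2) : ℝ × ℝ) ε, ?_, Metric.isOpen_ball, Metric.mem_ball_self hε0⟩
  rintro ⟨x, y⟩ hw
  rw [Metric.mem_ball, Prod.dist_eq, max_lt_iff, Real.dist_eq, Real.dist_eq] at hw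
  obtain ⟨hwx, hwy⟩ := hw
  simp only at hwx hwy
  have hxa' := abs_lt.mp hwx
  have hyy' := abs_lt.mp hwy
  rcases le_total a x with hax | hax
  · -- right side: use P
    set t := (x - a) / (p1 - a) with htdef
    have ht0 : 0 ≤ t := div_nonneg (by linarith) (by linarith)
    have ht1 : t ≤ 1/2 := by
      rw [htdef, div_le_iff₀ hpa]; linarith
    have htε : t * (p1 - a) = x - a := by rw [htdef]; field_simp
    have h1t : (0:ℝ) < 1 - t := by linarith
    have h1t' : (1:ℝ) - t ≠ 0 := h1t.ne'
    have htee : t * (p1 - a) ≤ ε := by rw [htε]; linarith [hxa'.2]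
    clear_value t
    have hvb : |(y - t * p2) / (1 - t) - y2| ≤ d := by
      have e : (y - t * p2) / (1 - t) - y2 = ((y - y2) + t * (y2 - p2)) / (1 - t) := by
        field_simp; ring
      rw [e, abs_div, abs_of_pos h1t, div_le_iff₀ h1t]
      have h1 : |(y - y2) + t * (y2 - p2)| ≤ ε + t * MP := by
        calc |(y - y2) + t * (y2 - p2)| ≤ |y - y2| + |t * (y2 - p2)| := abs_add_le _ _
        _ ≤ ε + t * MP := by
            rw [abs_mul, abs_of_nonneg ht0, ← hMP]
            exact add_le_add (le_of_lt hwy) le_rfl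
      have h4 : MP * (t * (p1 - a)) ≤ MP * ε := mul_le_mul_of_nonneg_left htee hMP0
      have h7 : 0 ≤ d * (p1 - a) * (1 - 2*t) := mul_nonneg (mul_nonneg hd0.le hpa.le) (by linarith)
      have h6 : (ε + t * MP) * (p1 - a) ≤ (d * (1 - t)) * (p1 - a) := by nlinarith [h4, hkeyP', h7]
      have h2 : ε + t * MP ≤ d * (1 - t) := le_of_mul_le_mul_right h6 hpa
      linarith
    have hvb' := abs_le.mp hvb
    exact combo_mem_s12 hc hA hC hP (by linarith) (by intro h; linarith) htdef ht0 ht1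
      (by linarith) (by linarith)
  · -- left side: use Q
    set t := (x - a) / (q1 - a) with htdef
    have hqa'' : a - q1 ≠ 0 := hqa.ne'
    have e0 : t = (a - x) / (a - q1) := by
      rw [htdef, show a - x = -(x - a) by ring, show a - q1 = -(q1 - a) by ring, neg_div_neg_eq]
    have ht0 : 0 ≤ t := by rw [e0]; exact div_nonneg (by linarith) (by linarith)
    have ht1 : t ≤ 1/2 := by
      rw [e0, div_le_iff₀ hqa]; linarith
    have htε : t * (a - q1) = a - x := by rw [e0]; field_simp
    have h1t : (0:ℝ) < 1 - t := by linarith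
    have h1t' : (1:ℝ) - t ≠ 0 := h1t.ne'
    have htee : t * (a - q1) ≤ ε := by rw [htε]; linarith [hxa'.1]
    clear_value t
    have hvb : |(y - t * q2) / (1 - t) - y2| ≤ d := by
      have e : (y - t * q2) / (1 - t) - y2 = ((y - y2) + t * (y2 - q2)) / (1 - t) := by
        field_simp; ring
      rw [e, abs_div, abs_of_pos h1t, div_le_iff₀ h1t]
      have h1 : |(y - y2) + t * (y2 - q2)| ≤ ε + t * MQ := by
        calc |(y - y2) + t * (y2 - q2)| ≤ |y - y2| + |t * (y2 - q2)| := abs_add_le _ _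
        _ ≤ ε + t * MQ := by
            rw [abs_mul, abs_of_nonneg ht0, ← hMQ]
            exact add_le_add (le_of_lt hwy) le_rfl
      have h4 : MQ * (t * (a - q1)) ≤ MQ * ε := mul_le_mul_of_nonneg_left htee hMQ0
      have h7 : 0 ≤ d * (a - q1) * (1 - 2*t) := mul_nonneg (mul_nonneg hd0.le hqa.le) (by linarith)
      have h6 : (ε + t * MQ) * (a - q1) ≤ (d * (1 - t)) * (a - q1) := by nlinarith [h4, hkeyQ', h7]
      have h2 : ε + t * MQ ≤ d * (1 - t) := le_of_mul_le_mul_right h6 hqa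
      linarith
    have hvb' := abs_le.mp hvb
    exact combo_mem_s12 hc hA hC hQ (by linarith) (by intro h; linarith) htdef ht0 ht1
      (by linarith) (by linarith)

lemma halfplane_of_three {K : Set (ℝ × ℝ)} (hK : IsCompact K) (hc : Convex ℝ K)
    {a y1 y2 y3 : ℝ}
    (h1 : ((a, y1) : ℝ × ℝ) ∈ frontier K) (h2 : ((a, y2) : ℝ × ℝ) ∈ frontier K)
    (h3 : ((a, y3) : ℝ × ℝ) ∈ frontier K)
    (h12 : y1 < y2) (h23 : y2 < y3) :
    (∀ p ∈ K, p.1 ≤ a) ∨ (∀ p ∈ K, a ≤ p.1) := by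
  by_contra h
  push_neg at h
  obtain ⟨⟨p, hpK, hpa⟩, ⟨q, hqK, hqa⟩⟩ := h
  have hsub : frontier K ⊆ K := hK.isClosed.frontier_subset
  have hint := mem_interior_of_three hc (hsub h1) (hsub h3)
    (p1 := p.1) (p2 := p.2) (q1 := q.1) (q2 := q.2)
    (by simpa using hpK) (by simpa using hqK) h12 h23 hqa hpa
  exact h2.2 hint

lemma order3 {P : ℕ → Prop} {b1 b2 b3 : ℕ} (h12 : b1 ≠ b2) (h13 : b1 ≠ b3) (h23 : b2 ≠ b3)
    (p1 : P b1) (p2 : P b2) (p3 : P b3) :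
    ∃ x y z, x < y ∧ y < z ∧ P x ∧ P y ∧ P z := by
  rcases h12.lt_or_gt with h | h <;> rcases h13.lt_or_gt with h' | h' <;>
    rcases h23.lt_or_gt with h'' | h'' <;>
    first
    | exact ⟨b1, b2, b3, by omega, by omega, p1, p2, p3⟩
    | exact ⟨b1, b3, b2, by omega, by omega, p1, p3, p2⟩
    | exact ⟨b2, b1, b3, by omega, by omega, p2, p1, p3⟩
    | exact ⟨b2, b3, b1, by omega, by omega, p2, p3, p1⟩
    | exact ⟨b3, b1, b2, by omega, by omega, p3, p1, p2⟩
    | exact ⟨b3, b2, b1, by omega, by omega, p3, p2, p1⟩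

lemma construction_vert (m n : ℕ) (hm : 1 ≤ m) :
    ∃ K : Fin ⌈(m : ℚ) / 2⌉₊ → Set (ℝ × ℝ),
      (∀ j, IsCompact (K j)) ∧ (∀ j, Convex ℝ (K j)) ∧
      ∀ a b : ℕ, 1 ≤ a → a ≤ m → 1 ≤ b → b ≤ n →
        ∃ j, ((a : ℝ), (b : ℝ)) ∈ frontier (K j) := by
  set half := ⌈(m : ℚ) / 2⌉₊ with hhalf
  have hh1 : m ≤ 2 * half := by
    have h := Nat.le_ceil ((m : ℚ) / 2)
    rw [div_le_iff₀ (by norm_num)] at h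
    exact_mod_cast (by linarith : (m : ℚ) ≤ 2 * half)
  have hh2 : 2 * half ≤ m + 1 := by
    have hc : half ≤ (m + 1) / 2 := by
      apply Nat.ceil_le.mpr
      rw [div_le_iff₀ (by norm_num : (0:ℚ) < 2)]
      exact_mod_cast (by omega : m ≤ (m + 1) / 2 * 2)
    omega
  refine ⟨fun j => Icc ((j.1 : ℝ) + 1) ((m : ℝ) - j.1) ×ˢ Icc (0 : ℝ) ((n : ℝ) + 1),
    fun j => (isCompact_Icc).prod isCompact_Icc,
    fun j => (convex_Icc _ _).prod (convex_Icc _ _), ?_⟩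
  intro a b ha1 ham hb1 hbn
  set jn : ℕ := if a ≤ half then a - 1 else m - a with hjn
  have hjlt : jn < half := by rw [hjn]; split_ifs <;> omega
  have hedge : a = jn + 1 ∨ a = m - jn := by rw [hjn]; split_ifs <;> omega
  have hjm : jn + 1 ≤ m - jn := by rw [hjn]; split_ifs <;> omega
  refine ⟨⟨jn, hjlt⟩, ?_⟩
  have hmem : ((a : ℝ), (b : ℝ)) ∈
      Icc ((jn : ℝ) + 1) ((m : ℝ) - jn) ×ˢ Icc (0 : ℝ) ((n : ℝ) + 1) := by
    simp only [Set.mem_prod, Set.mem_Icc]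
    constructor
    · constructor
      · have : jn + 1 ≤ a := by omega
        exact_mod_cast this
      · have : (a : ℝ) ≤ (m : ℝ) - jn := by
          have h' : a + jn ≤ m := by omega
          have := (Nat.cast_le (α := ℝ)).mpr h'
          push_cast at this
          linarith
        exact this
    · constructor
      · positivity
      · have : b ≤ n + 1 := by omega
        exact_mod_cast this
  have hnotint : ((a : ℝ), (b : ℝ)) ∉
      interior (Icc ((jn : ℝ) + 1) ((m : ℝ) - jn) ×ˢ Icc (0 : ℝ) ((n : ℝ) + 1)) := by
    rw [interior_prod_eq, interior_Icc]
    rintro ⟨hx, -⟩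
    rw [mem_Ioo] at hx
    rcases hedge with he | he
    · have : (a : ℝ) = (jn : ℝ) + 1 := by exact_mod_cast he
      linarith [hx.1]
    · have h' : a + jn = m := by omega
      have : (a : ℝ) + jn = m := by exact_mod_cast h'
      linarith [hx.2]
  exact ⟨subset_closure hmem, hnotint⟩

lemma construction_horiz (m n : ℕ) (hn : 1 ≤ n) :
    ∃ K : Fin ⌈(n : ℚ) / 2⌉₊ → Set (ℝ × ℝ),
      (∀ j, IsCompact (K j)) ∧ (∀ j, Convex ℝ (K j)) ∧
      ∀ a b : ℕ, 1 ≤ a → a ≤ m → 1 ≤ b → b ≤ n →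
        ∃ j, ((a : ℝ), (b : ℝ)) ∈ frontier (K j) := by
  obtain ⟨K, hcomp, hconv, hcover⟩ := construction_vert n m hn
  refine ⟨fun j => (Homeomorph.prodComm ℝ ℝ) ⁻¹' K j, ?_, ?_, ?_⟩
  · intro j
    exact (Homeomorph.isCompact_preimage (Homeomorph.prodComm ℝ ℝ)).mpr (hcomp j)
  · intro j
    exact (hconv j).is_linear_preimage ⟨fun x y => rfl, fun c x => rfl⟩
  · intro a b ha1 ham hb1 hbn
    obtain ⟨j, hj⟩ := hcover b a hb1 hbn ha1 ham
    refine ⟨j, ?_⟩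
    rw [← Homeomorph.preimage_frontier]
    exact hj

/-- The minimum number of closed convex curves (boundaries of compact convex
sets) needed to cover the m×n grid equals min{⌈m/2⌉, ⌈n/2⌉}. -/
theorem min_convex_curves_cover_grid
    (m n : ℕ) (hm : 1 ≤ m) (hn : 1 ≤ n) :
    IsLeast {k : ℕ | ∃ K : Fin k → Set (ℝ × ℝ),
        (∀ j, IsCompact (K j)) ∧ (∀ j, Convex ℝ (K j)) ∧
        ∀ a b : ℕ, 1 ≤ a → a ≤ m → 1 ≤ b → b ≤ n →
          ∃ j, ((a : ℝ), (b : ℝ)) ∈ frontier (K j)}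
      (min ⌈(m : ℚ) / 2⌉₊ ⌈(n : ℚ) / 2⌉₊) := by
  classical
  constructor
  · -- membership
    rcases le_total m n with hmn | hmn
    · have hle : ⌈(m : ℚ) / 2⌉₊ ≤ ⌈(n : ℚ) / 2⌉₊ := by
        apply Nat.ceil_le_ceil
        have : (m : ℚ) ≤ n := by exact_mod_cast hmn
        linarith
      rw [min_eq_left hle]
      exact construction_vert m n hm
    · have hle : ⌈(n : ℚ) / 2⌉₊ ≤ ⌈(m : ℚ) / 2⌉₊ := by
        apply Nat.ceil_le_ceil
        have : (n : ℚ) ≤ m := by exact_mod_cast hmn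
        linarith
      rw [min_eq_right hle]
      exact construction_horiz m n hn
  · -- lower bound
    rintro k ⟨K, hcomp, hconv, hcover⟩
    by_contra hlt
    push_neg at hlt
    rw [lt_min_iff] at hlt
    have hkm : 2 * k < m := by
      have := Nat.lt_ceil.mp hlt.1
      rw [lt_div_iff₀ (by norm_num : (0:ℚ) < 2)] at this
      exact_mod_cast (by linarith : (2 * k : ℚ) < m)
    have hkn : 2 * k < n := by
      have := Nat.lt_ceil.mp hlt.2
      rw [lt_div_iff₀ (by norm_num : (0:ℚ) < 2)] at this
      exact_mod_cast (by linarith : (2 * k : ℚ) < n)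
    have hk0 : 0 < k := by
      obtain ⟨j, -⟩ := hcover 1 1 le_rfl hm le_rfl hn
      exact j.pos
    -- bad columns
    set Bad : Fin k → ℕ → Prop := fun j a =>
      (∃ y : ℝ, ((a : ℝ), y) ∈ K j) ∧
      ((∀ p ∈ K j, p.1 ≤ (a : ℝ)) ∨ (∀ p ∈ K j, (a : ℝ) ≤ p.1)) with hBad
    have hbadcard : ∀ j, ((Finset.Icc 1 m).filter (Bad j)).card ≤ 2 := by
      intro j
      have hinj : Set.InjOn (fun a : ℕ => decide (∀ p ∈ K j, p.1 ≤ (a : ℝ)))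
          ((Finset.Icc 1 m).filter (Bad j)) := ?_
      · calc ((Finset.Icc 1 m).filter (Bad j)).card
            ≤ (Finset.univ : Finset Bool).card :=
              Finset.card_le_card_of_injOn _ (fun _ _ => Finset.mem_univ _) hinj
          _ = 2 := by simp
      intro a1 ha1 a2 ha2 hg
      rw [Finset.coe_filter] at ha1 ha2
      obtain ⟨hms1, hb1⟩ := ha1
      obtain ⟨hms2, hb2⟩ := ha2
      simp only at hg
      obtain ⟨⟨w1, hw1⟩, hd1⟩ := hb1
      obtain ⟨⟨w2, hw2⟩, hd2⟩ := hb2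
      by_cases h1 : ∀ p ∈ K j, p.1 ≤ (a1 : ℝ)
      · have h2' : ∀ p ∈ K j, p.1 ≤ (a2 : ℝ) := by
          have : decide (∀ p ∈ K j, p.1 ≤ (a1 : ℝ)) = true := decide_eq_true h1
          rw [this] at hg
          exact of_decide_eq_true hg.symm
        have e1 : (a1 : ℝ) ≤ a2 := by simpa using h2' _ hw1
        have e2 : (a2 : ℝ) ≤ a1 := by simpa using h1 _ hw2
        exact_mod_cast le_antisymm e1 e2
      · have hd1' : ∀ p ∈ K j, (a1 : ℝ) ≤ p.1 := hd1.resolve_left h1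
        have h2' : ¬ ∀ p ∈ K j, p.1 ≤ (a2 : ℝ) := by
          have : decide (∀ p ∈ K j, p.1 ≤ (a1 : ℝ)) = false := decide_eq_false h1
          rw [this] at hg
          exact of_decide_eq_false hg.symm
        have hd2' : ∀ p ∈ K j, (a2 : ℝ) ≤ p.1 := hd2.resolve_left h2'
        have e1 : (a1 : ℝ) ≤ a2 := by simpa using hd1' _ hw2
        have e2 : (a2 : ℝ) ≤ a1 := by simpa using hd2' _ hw1
        exact_mod_cast le_antisymm e1 e2
    -- good column exists
    have hgood : ∃ a ∈ Finset.Icc 1 m, ∀ j, ¬ Bad j a := by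
      by_contra hng
      push_neg at hng
      have hsub : Finset.Icc 1 m ⊆
          Finset.univ.biUnion (fun j => (Finset.Icc 1 m).filter (Bad j)) := by
        intro a ha
        obtain ⟨j, hj⟩ := hng a ha
        exact Finset.mem_biUnion.mpr ⟨j, Finset.mem_univ _, Finset.mem_filter.mpr ⟨ha, hj⟩⟩
      have h1 := Finset.card_le_card hsub
      have h2 := Finset.card_biUnion_le (s := (Finset.univ : Finset (Fin k)))
        (t := fun j => (Finset.Icc 1 m).filter (Bad j))
      have h3 : ∑ j : Fin k, ((Finset.Icc 1 m).filter (Bad j)).card ≤ k * 2 := by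
        calc ∑ j : Fin k, ((Finset.Icc 1 m).filter (Bad j)).card
            ≤ ∑ _j : Fin k, 2 := Finset.sum_le_sum (fun j _ => hbadcard j)
          _ = k * 2 := by simp [Finset.sum_const, mul_comm]
      rw [Nat.card_Icc] at h1
      omega
    obtain ⟨a, haI, hgood⟩ := hgood
    rw [Finset.mem_Icc] at haI
    -- choose curve for each row point
    have hex : ∀ b : ℕ, ∃ j : Fin k,
        b ∈ Finset.Icc 1 n → ((a : ℝ), (b : ℝ)) ∈ frontier (K j) := by
      intro b
      by_cases hb : b ∈ Finset.Icc 1 n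
      · rw [Finset.mem_Icc] at hb
        obtain ⟨j, hj⟩ := hcover a b haI.1 haI.2 hb.1 hb.2
        exact ⟨j, fun _ => hj⟩
      · exact ⟨⟨0, hk0⟩, fun h => absurd h hb⟩
    choose f hf using hex
    have hfib : ∀ j ∈ (Finset.univ : Finset (Fin k)),
        ((Finset.Icc 1 n).filter (fun b => f b = j)).card ≤ 2 := by
      intro j _
      by_contra hgt
      push_neg at hgt
      obtain ⟨b1, b2, b3, hb1, hb2, hb3, h12, h13, h23⟩ :=
        Finset.two_lt_card_iff.mp hgt
      have m1 : ((a : ℝ), (b1 : ℝ)) ∈ frontier (K j) := by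
        obtain ⟨hb, he⟩ := Finset.mem_filter.mp hb1
        exact he ▸ hf b1 hb
      have m2 : ((a : ℝ), (b2 : ℝ)) ∈ frontier (K j) := by
        obtain ⟨hb, he⟩ := Finset.mem_filter.mp hb2
        exact he ▸ hf b2 hb
      have m3 : ((a : ℝ), (b3 : ℝ)) ∈ frontier (K j) := by
        obtain ⟨hb, he⟩ := Finset.mem_filter.mp hb3
        exact he ▸ hf b3 hb
      obtain ⟨x, y, z, hxy, hyz, px, py, pz⟩ :=
        order3 (P := fun b => ((a : ℝ), (b : ℝ)) ∈ frontier (K j)) h12 h13 h23 m1 m2 m3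
      have hhalf := halfplane_of_three (hcomp j) (hconv j) px py pz
        (by exact_mod_cast hxy) (by exact_mod_cast hyz)
      apply hgood j
      refine ⟨⟨(x : ℝ), (hcomp j).isClosed.frontier_subset px⟩, hhalf⟩
    have hcount : n ≤ 2 * k := by
      have h1 : (Finset.Icc 1 n).card =
          ∑ j : Fin k, ((Finset.Icc 1 n).filter (fun b => f b = j)).card :=
        Finset.card_eq_sum_card_fiberwise (fun b _ => Finset.mem_univ (f b))
      have h2 : ∑ j : Fin k, ((Finset.Icc 1 n).filter (fun b => f b = j)).card
          ≤ k * 2 := by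
        calc ∑ j : Fin k, ((Finset.Icc 1 n).filter (fun b => f b = j)).card
            ≤ ∑ _j : Fin k, 2 := Finset.sum_le_sum hfib
          _ = k * 2 := by simp [Finset.sum_const, mul_comm]
      rw [Nat.card_Icc] at h1
      omega
    omega
end

section
/- If an n×n grid is covered by m axis-parallel squares of side length 2 with integer corners, then m ≥ n²/7. -/
def Bset (c : ℤ × ℤ) : Finset (ℤ × ℤ) :=
  {(c.1, c.2), (c.1+1, c.2), (c.1+2, c.2), (c.1, c.2+1), (c.1+2, c.2+1),
   (c.1, c.2+2), (c.1+1, c.2+2), (c.1+2, c.2+2)}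

lemma memBset (p c : ℤ × ℤ) : p ∈ Bset c ↔
    ((p.1 = c.1 ∨ p.1 = c.1 + 1 ∨ p.1 = c.1 + 2) ∧ (p.2 = c.2 ∨ p.2 = c.2 + 2)) ∨
    ((p.1 = c.1 ∨ p.1 = c.1 + 2) ∧ p.2 = c.2 + 1) := by
  simp only [Bset, Finset.mem_insert, Finset.mem_singleton, Prod.ext_iff]
  omega

lemma cardBset (c : ℤ × ℤ) : (Bset c).card = 8 := by
  have himg : Bset c = Finset.image (fun v : ℤ × ℤ => (c.1 + v.1, c.2 + v.2))
      ({(0,0),(1,0),(2,0),(0,1),(2,1),(0,2),(1,2),(2,2)} : Finset (ℤ × ℤ)) := by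
    ext p
    simp only [Bset, Finset.mem_insert, Finset.mem_singleton, Finset.mem_image,
      Prod.ext_iff]
    constructor
    · intro h
      rcases h with h|h|h|h|h|h|h|h
      · exact ⟨(0,0), by simp, by omega, by omega⟩
      · exact ⟨(1,0), by simp, by omega, by omega⟩
      · exact ⟨(2,0), by simp, by omega, by omega⟩
      · exact ⟨(0,1), by simp, by omega, by omega⟩
      · exact ⟨(2,1), by simp, by omega, by omega⟩
      · exact ⟨(0,2), by simp, by omega, by omega⟩
      · exact ⟨(1,2), by simp, by omega, by omega⟩
      · exact ⟨(2,2), by simp, by omega, by omega⟩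
    · rintro ⟨v, hv, hv1, hv2⟩
      rcases hv with h|h|h|h|h|h|h|h <;> omega
  rw [himg, Finset.card_image_of_injective _ ?_]
  · decide
  · intro a b hab
    have h' : c.1 + a.1 = c.1 + b.1 ∧ c.2 + a.2 = c.2 + b.2 := by
      simpa [Prod.ext_iff] using hab
    exact Prod.ext_iff.mpr ⟨by omega, by omega⟩

lemma geo_pair (c d q : ℤ × ℤ) (h1 : q.1 = c.1 + 1) (h2 : q.2 = c.2 + 1)
    (hq : q ∈ Bset d) :
    ∃ a b : ℤ × ℤ, a ≠ b ∧ a ∈ Bset c ∩ Bset d ∧ b ∈ Bset c ∩ Bset d := by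
  have hq' := (memBset q d).mp hq
  clear hq
  have hcase : (q.1 = d.1 ∧ q.2 = d.2) ∨ (q.1 = d.1+1 ∧ q.2 = d.2) ∨
      (q.1 = d.1+2 ∧ q.2 = d.2) ∨ (q.1 = d.1 ∧ q.2 = d.2+1) ∨
      (q.1 = d.1+2 ∧ q.2 = d.2+1) ∨ (q.1 = d.1 ∧ q.2 = d.2+2) ∨
      (q.1 = d.1+1 ∧ q.2 = d.2+2) ∨ (q.1 = d.1+2 ∧ q.2 = d.2+2) := by
    rcases hq' with ⟨ha|ha|ha, hb|hb⟩|⟨ha|ha, hb⟩ <;> omega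
  clear hq'
  rcases hcase with ⟨e1,e2⟩|⟨e1,e2⟩|⟨e1,e2⟩|⟨e1,e2⟩|⟨e1,e2⟩|⟨e1,e2⟩|⟨e1,e2⟩|⟨e1,e2⟩
  · refine ⟨(d.1+1, d.2), (d.1, d.2+1), ?_, ?_, ?_⟩
    · simp only [ne_eq, Prod.mk.injEq, not_and]
      omega
    · rw [Finset.mem_inter]
      exact ⟨by rw [memBset]; omega, by rw [memBset]; omega⟩
    · rw [Finset.mem_inter]
      exact ⟨by rw [memBset]; omega, by rw [memBset]; omega⟩
  · refine ⟨(d.1, d.2), (d.1+2, d.2), ?_, ?_, ?_⟩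
    · simp only [ne_eq, Prod.mk.injEq, not_and]
      omega
    · rw [Finset.mem_inter]
      exact ⟨by rw [memBset]; omega, by rw [memBset]; omega⟩
    · rw [Finset.mem_inter]
      exact ⟨by rw [memBset]; omega, by rw [memBset]; omega⟩
  · refine ⟨(d.1+1, d.2), (d.1+2, d.2+1), ?_, ?_, ?_⟩
    · simp only [ne_eq, Prod.mk.injEq, not_and]
      omega
    · rw [Finset.mem_inter]
      exact ⟨by rw [memBset]; omega, by rw [memBset]; omega⟩
    · rw [Finset.mem_inter]
      exact ⟨by rw [memBset]; omega, by rw [memBset]; omega⟩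
  · refine ⟨(d.1, d.2), (d.1, d.2+2), ?_, ?_, ?_⟩
    · simp only [ne_eq, Prod.mk.injEq, not_and]
      omega
    · rw [Finset.mem_inter]
      exact ⟨by rw [memBset]; omega, by rw [memBset]; omega⟩
    · rw [Finset.mem_inter]
      exact ⟨by rw [memBset]; omega, by rw [memBset]; omega⟩
  · refine ⟨(d.1+2, d.2), (d.1+2, d.2+2), ?_, ?_, ?_⟩
    · simp only [ne_eq, Prod.mk.injEq, not_and]
      omega
    · rw [Finset.mem_inter]
      exact ⟨by rw [memBset]; omega, by rw [memBset]; omega⟩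
    · rw [Finset.mem_inter]
      exact ⟨by rw [memBset]; omega, by rw [memBset]; omega⟩
  · refine ⟨(d.1, d.2+1), (d.1+1, d.2+2), ?_, ?_, ?_⟩
    · simp only [ne_eq, Prod.mk.injEq, not_and]
      omega
    · rw [Finset.mem_inter]
      exact ⟨by rw [memBset]; omega, by rw [memBset]; omega⟩
    · rw [Finset.mem_inter]
      exact ⟨by rw [memBset]; omega, by rw [memBset]; omega⟩
  · refine ⟨(d.1, d.2+2), (d.1+2, d.2+2), ?_, ?_, ?_⟩
    · simp only [ne_eq, Prod.mk.injEq, not_and]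
      omega
    · rw [Finset.mem_inter]
      exact ⟨by rw [memBset]; omega, by rw [memBset]; omega⟩
    · rw [Finset.mem_inter]
      exact ⟨by rw [memBset]; omega, by rw [memBset]; omega⟩
  · refine ⟨(d.1+2, d.2+1), (d.1+1, d.2+2), ?_, ?_, ?_⟩
    · simp only [ne_eq, Prod.mk.injEq, not_and]
      omega
    · rw [Finset.mem_inter]
      exact ⟨by rw [memBset]; omega, by rw [memBset]; omega⟩
    · rw [Finset.mem_inter]
      exact ⟨by rw [memBset]; omega, by rw [memBset]; omega⟩

/-- If the n×n grid is covered by m boundaries of axis-parallel squares of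
side length 2 with integer corners, then m ≥ n²/7. -/
theorem squares_side_two_cover_lower_bound
    (n : ℕ)
    (SqBoundary : ℤ × ℤ → Set (ℤ × ℤ))
    (hSq : ∀ c, SqBoundary c = {p |
      ((p.1 = c.1 ∨ p.1 = c.1 + 2) ∧ c.2 ≤ p.2 ∧ p.2 ≤ c.2 + 2) ∨
      ((p.2 = c.2 ∨ p.2 = c.2 + 2) ∧ c.1 ≤ p.1 ∧ p.1 ≤ c.1 + 2)})
    (S : Finset (ℤ × ℤ))
    (hcover : ∀ p : ℤ × ℤ, 1 ≤ p.1 → p.1 ≤ (n : ℤ) → 1 ≤ p.2 →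
      p.2 ≤ (n : ℤ) → ∃ c ∈ S, p ∈ SqBoundary c) :
    (n : ℝ) ^ 2 / 7 ≤ (S.card : ℝ) := by
  classical
  have hSqB : ∀ p c : ℤ × ℤ, p ∈ SqBoundary c ↔ p ∈ Bset c := by
    intro p c
    rw [hSq, memBset]
    simp only [Set.mem_setOf_eq]
    omega
  set G : Finset (ℤ × ℤ) := (Finset.Icc (1:ℤ) (n:ℤ)) ×ˢ (Finset.Icc (1:ℤ) (n:ℤ)) with hGdef
  have hGmem : ∀ p : ℤ × ℤ, p ∈ G ↔ (1 ≤ p.1 ∧ p.1 ≤ (n:ℤ) ∧ 1 ≤ p.2 ∧ p.2 ≤ (n:ℤ)) := by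
    intro p
    rw [hGdef, Finset.mem_product, Finset.mem_Icc, Finset.mem_Icc]
    tauto
  have hGcard : G.card = n ^ 2 := by
    rw [hGdef, Finset.card_product, Int.card_Icc]
    have : ((n:ℤ) + 1 - 1).toNat = n := by omega
    rw [this, sq]
  have hcov : ∀ p ∈ G, ∃ c, c ∈ S ∧ p ∈ SqBoundary c := by
    intro p hp
    rw [hGmem] at hp
    obtain ⟨c, hcS, hcB⟩ := hcover p hp.1 hp.2.1 hp.2.2.1 hp.2.2.2
    exact ⟨c, hcS, hcB⟩
  choose! f hfS hfB using hcov
  set fib : ℤ × ℤ → Finset (ℤ × ℤ) := fun c => G.filter (fun p => f p = c) with hfibdef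
  have hfibmem : ∀ c p, p ∈ fib c ↔ (p ∈ G ∧ f p = c) := by
    intro c p
    rw [hfibdef]
    exact Finset.mem_filter
  have hfibsub : ∀ c, fib c ⊆ Bset c := by
    intro c p hp
    obtain ⟨hpG, hpf⟩ := (hfibmem c p).mp hp
    have := (hSqB p (f p)).mp (hfB p hpG)
    rwa [hpf] at this
  have hfible : ∀ c, (fib c).card ≤ 8 := by
    intro c
    have := Finset.card_le_card (hfibsub c)
    rwa [cardBset] at this
  set Fu : Finset (ℤ × ℤ) := S.filter (fun c => (fib c).card = 8) with hFudef
  have hFumem : ∀ c, c ∈ Fu ↔ (c ∈ S ∧ (fib c).card = 8) := by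
    intro c
    rw [hFudef]
    exact Finset.mem_filter
  have hfull : ∀ c ∈ Fu, fib c = Bset c := by
    intro c hc
    exact Finset.eq_of_subset_of_card_le (hfibsub c)
      (by rw [((hFumem c).mp hc).2, cardBset])
  have hfullG : ∀ c ∈ Fu, ∀ p ∈ Bset c, p ∈ G ∧ f p = c := by
    intro c hc p hp
    rw [← hfull c hc] at hp
    exact (hfibmem c p).mp hp
  have hqG : ∀ c ∈ Fu, ((c.1 + 1, c.2 + 1) : ℤ × ℤ) ∈ G := by
    intro c hc
    have h1 : ((c.1, c.2) : ℤ × ℤ) ∈ G :=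
      (hfullG c hc _ (by rw [memBset]; omega)).1
    have h2 : ((c.1 + 2, c.2 + 2) : ℤ × ℤ) ∈ G :=
      (hfullG c hc _ (by rw [memBset]; omega)).1
    rw [hGmem] at h1 h2 ⊢
    simp only at h1 h2 ⊢
    omega
  have hqnot : ∀ c : ℤ × ℤ, ((c.1 + 1, c.2 + 1) : ℤ × ℤ) ∉ Bset c := by
    intro c hmem
    rw [memBset] at hmem
    simp only at hmem
    omega
  set hc2 : ℤ × ℤ → ℤ × ℤ := fun c => f (c.1 + 1, c.2 + 1) with hc2def
  have key : ∀ c ∈ Fu, ∃ a b : ℤ × ℤ, a ≠ b ∧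
      a ∈ Bset c ∩ Bset (hc2 c) ∧ b ∈ Bset c ∩ Bset (hc2 c) := by
    intro c hc
    have hmem : ((c.1 + 1, c.2 + 1) : ℤ × ℤ) ∈ Bset (hc2 c) := by
      rw [hc2def]
      exact (hSqB _ _).mp (hfB _ (hqG c hc))
    exact geo_pair c (hc2 c) (c.1 + 1, c.2 + 1) rfl rfl hmem
  have hhS : ∀ c ∈ Fu, hc2 c ∈ S := by
    intro c hc
    rw [hc2def]
    exact hfS _ (hqG c hc)
  have hhnotfull : ∀ c ∈ Fu, hc2 c ∉ Fu := by
    intro c hc hcontra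
    obtain ⟨a, b, hab, ha, hb⟩ := key c hc
    have haC := Finset.mem_inter.mp ha
    have hfa1 := (hfullG c hc a haC.1).2
    have hfa2 := (hfullG (hc2 c) hcontra a haC.2).2
    have hceq : c = hc2 c := hfa1.symm.trans hfa2
    have hqfib : ((c.1 + 1, c.2 + 1) : ℤ × ℤ) ∈ fib c := by
      rw [hfibmem]
      exact ⟨hqG c hc, (rfl : f (c.1 + 1, c.2 + 1) = hc2 c).trans hceq.symm⟩
    rw [hfull c hc] at hqfib
    exact hqnot c hqfib
  -- global counting
  have htot : ∑ c ∈ S, (fib c).card = n ^ 2 := by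
    rw [← hGcard]
    exact (Finset.card_eq_sum_card_fiberwise (fun p hp => hfS p hp)).symm
  set Nf : Finset (ℤ × ℤ) := S.filter (fun c => ¬ (fib c).card = 8) with hNfdef
  have hNfmem : ∀ c, c ∈ Nf ↔ (c ∈ S ∧ ¬ (fib c).card = 8) := by
    intro c
    rw [hNfdef]
    exact Finset.mem_filter
  have hsplit : ∑ c ∈ Fu, (fib c).card + ∑ c ∈ Nf, (fib c).card = ∑ c ∈ S, (fib c).card := by
    rw [hFudef, hNfdef]
    exact Finset.sum_filter_add_sum_filter_not S _ _
  have hFusum : ∑ c ∈ Fu, (fib c).card = 8 * Fu.card := by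
    rw [Finset.sum_congr rfl (fun c hc => ((hFumem c).mp hc).2), Finset.sum_const,
      smul_eq_mul, mul_comm]
  have hkcount : Fu.card = ∑ d ∈ Nf, (Fu.filter fun c => hc2 c = d).card := by
    apply Finset.card_eq_sum_card_fiberwise
    intro c hc
    rw [Finset.mem_coe, hNfmem]
    refine ⟨hhS c hc, ?_⟩
    intro hfull8
    exact hhnotfull c hc ((hFumem (hc2 c)).mpr ⟨hhS c hc, hfull8⟩)
  have hpoint : ∀ d ∈ Nf, (fib d).card + (Fu.filter fun c => hc2 c = d).card ≤ 7 := by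
    intro d hd
    have hdnotfull : ¬ (fib d).card = 8 := ((hNfmem d).mp hd).2
    by_cases hT0 : (Fu.filter fun c => hc2 c = d).card = 0
    · have := hfible d
      omega
    · have hdisj : ∀ c1 ∈ (Fu.filter fun c => hc2 c = d), ∀ c2 ∈ (Fu.filter fun c => hc2 c = d),
          c1 ≠ c2 → Disjoint (Bset c1 ∩ Bset d) (Bset c2 ∩ Bset d) := by
        intro c1 hc1 c2 hc2' hne
        have hc1F := (Finset.mem_filter.mp hc1).1
        have hc2F := (Finset.mem_filter.mp hc2').1
        rw [Finset.disjoint_left]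
        intro p hp1 hp2
        have e1 := (hfullG c1 hc1F p (Finset.mem_inter.mp hp1).1).2
        have e2 := (hfullG c2 hc2F p (Finset.mem_inter.mp hp2).1).2
        exact hne (by rw [← e1, e2])
      have hUcard : ((Fu.filter fun c => hc2 c = d).biUnion (fun c => Bset c ∩ Bset d)).card
          = ∑ c ∈ (Fu.filter fun c => hc2 c = d), (Bset c ∩ Bset d).card :=
        Finset.card_biUnion hdisj
      have h2le : ∀ c ∈ (Fu.filter fun c => hc2 c = d), 2 ≤ (Bset c ∩ Bset d).card := by
        intro c hc
        have hcF := (Finset.mem_filter.mp hc).1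
        have hcd := (Finset.mem_filter.mp hc).2
        obtain ⟨a, b, hab, ha, hb⟩ := key c hcF
        rw [hcd] at ha hb
        have : 1 < (Bset c ∩ Bset d).card := Finset.one_lt_card.mpr ⟨a, ha, b, hb, hab⟩
        omega
      have hU2 : 2 * (Fu.filter fun c => hc2 c = d).card
          ≤ ((Fu.filter fun c => hc2 c = d).biUnion (fun c => Bset c ∩ Bset d)).card := by
        rw [hUcard]
        calc 2 * (Fu.filter fun c => hc2 c = d).card
            = ∑ _c ∈ (Fu.filter fun c => hc2 c = d), 2 := by
              rw [Finset.sum_const, smul_eq_mul, mul_comm]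
          _ ≤ _ := Finset.sum_le_sum h2le
      have hUsub : ((Fu.filter fun c => hc2 c = d).biUnion (fun c => Bset c ∩ Bset d)) ⊆ Bset d := by
        intro p hp
        obtain ⟨c, _, hpc⟩ := Finset.mem_biUnion.mp hp
        exact (Finset.mem_inter.mp hpc).2
      have hdisjU : Disjoint (fib d)
          ((Fu.filter fun c => hc2 c = d).biUnion (fun c => Bset c ∩ Bset d)) := by
        rw [Finset.disjoint_left]
        intro p hp hpU
        obtain ⟨c, hcT, hpc⟩ := Finset.mem_biUnion.mp hpU
        have hcF := (Finset.mem_filter.mp hcT).1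
        have hfc := (hfullG c hcF p (Finset.mem_inter.mp hpc).1).2
        have hfd : f p = d := ((hfibmem d p).mp hp).2
        have hcd : c = d := by rw [← hfc, hfd]
        have h8 : (fib c).card = 8 := ((hFumem c).mp hcF).2
        rw [hcd] at h8
        exact hdnotfull h8
      have hun : (fib d).card
          + ((Fu.filter fun c => hc2 c = d).biUnion (fun c => Bset c ∩ Bset d)).card ≤ 8 := by
        rw [← Finset.card_union_of_disjoint hdisjU]
        have hsub : fib d ∪ ((Fu.filter fun c => hc2 c = d).biUnion (fun c => Bset c ∩ Bset d))
            ⊆ Bset d := Finset.union_subset (hfibsub d) hUsub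
        have := Finset.card_le_card hsub
        rwa [cardBset] at this
      omega
  have hNfsum : ∑ c ∈ Nf, ((fib c).card + (Fu.filter fun cc => hc2 cc = c).card)
      ≤ 7 * Nf.card := by
    calc ∑ c ∈ Nf, ((fib c).card + (Fu.filter fun cc => hc2 cc = c).card)
        ≤ ∑ _c ∈ Nf, 7 := Finset.sum_le_sum hpoint
      _ = 7 * Nf.card := by rw [Finset.sum_const, smul_eq_mul, mul_comm]
  have hcards : Fu.card + Nf.card = S.card := by
    rw [hFudef, hNfdef]
    exact Finset.card_filter_add_card_filter_not _
  have e1 : ∑ c ∈ Nf, ((fib c).card + (Fu.filter fun cc => hc2 cc = c).card)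
      = ∑ c ∈ Nf, (fib c).card + Fu.card := by
    rw [Finset.sum_add_distrib, ← hkcount]
  have hmain : n ^ 2 ≤ 7 * S.card := by omega
  rw [div_le_iff₀ (by norm_num : (0:ℝ) < 7)]
  exact_mod_cast (by omega : n ^ 2 ≤ S.card * 7)
end

section
/- The n×n grid can be covered by at most n²/4 + 2n + 4 unit circles, i.e., circles of radius 1 whose centers are at half-integer points so that each circle passes through exactly 4 lattice points. -/
/-- Auxiliary: parametrization of circle centers for the covering. -/
def gridCtr (ij : ℕ × ℕ) : ℤ × ℤ :=
  (((4 * (ij.1 / 2) + (2 * ij.2 + ij.1 % 2) % 4 : ℕ) : ℤ), ((2 * ij.2 : ℕ) : ℤ))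

lemma grid_cover_aux (n : ℕ) :
    ∃ C : Finset (ℤ × ℤ),
      C.card ≤ (2 * ((n+1)/4) + 2) * ((n+1)/2 + 1) ∧
      ∀ x y : ℤ, 1 ≤ x → x ≤ (n : ℤ) → 1 ≤ y → y ≤ (n : ℤ) →
        ∃ c ∈ C, (x - c.1) ^ 2 + (y - c.2) ^ 2 = 1 := by
  refine ⟨(Finset.range (2 * ((n+1)/4) + 2) ×ˢ Finset.range ((n+1)/2 + 1)).image gridCtr,
    ?_, ?_⟩
  · calc _ ≤ (Finset.range (2 * ((n+1)/4) + 2) ×ˢ Finset.range ((n+1)/2 + 1)).card :=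
        Finset.card_image_le
      _ = _ := by simp [Finset.card_product]
  · intro x y hx1 hx2 hy1 hy2
    have hmem : ∀ i j : ℕ, i < 2 * ((n+1)/4) + 2 → j < (n+1)/2 + 1 →
        gridCtr (i, j) ∈ (Finset.range (2 * ((n+1)/4) + 2) ×ˢ
          Finset.range ((n+1)/2 + 1)).image gridCtr := by
      intro i j hi hj
      exact Finset.mem_image_of_mem gridCtr (by simp [Finset.mem_product, hi, hj])
    have step : ∀ (i j : ℕ) (cx cy : ℤ), i < 2 * ((n+1)/4) + 2 → j < (n+1)/2 + 1 →
        gridCtr (i, j) = (cx, cy) → (x - cx)^2 + (y - cy)^2 = 1 →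
        ∃ c ∈ (Finset.range (2 * ((n+1)/4) + 2) ×ˢ
          Finset.range ((n+1)/2 + 1)).image gridCtr,
          (x - c.1) ^ 2 + (y - c.2) ^ 2 = 1 := by
      intro i j cx cy hi hj he hd
      exact ⟨(cx, cy), he ▸ hmem i j hi hj, hd⟩
    have hcases : (y % 2 = 1 ∧ (x - y) % 4 = 1)
        ∨ (y % 2 = 1 ∧ (x - y) % 4 = 2)
        ∨ (y % 2 = 1 ∧ (x - y) % 4 = 0)
        ∨ (y % 2 = 1 ∧ (x - y) % 4 = 3)
        ∨ (y % 2 = 0 ∧ (x - y) % 4 = 0)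
        ∨ (y % 2 = 0 ∧ (x - y) % 4 = 3)
        ∨ (y % 2 = 0 ∧ (x - y) % 4 = 1)
        ∨ (y % 2 = 0 ∧ (x - y) % 4 = 2) := by omega
    rcases hcases with ⟨hp, hd⟩ | ⟨hp, hd⟩ | ⟨hp, hd⟩ | ⟨hp, hd⟩ | ⟨hp, hd⟩ | ⟨hp, hd⟩ | ⟨hp, hd⟩ | ⟨hp, hd⟩
    · refine step (2 * (x.toNat / 4)) ((y+1).toNat / 2) (x) (y+1) (by omega) (by omega)
        ?_ (by ring)
      simp only [gridCtr, Prod.mk.injEq]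
      omega
    · refine step (2 * (x.toNat / 4) + 1) ((y+1).toNat / 2) (x) (y+1) (by omega) (by omega)
        ?_ (by ring)
      simp only [gridCtr, Prod.mk.injEq]
      omega
    · refine step (2 * (x.toNat / 4) + 1) ((y-1).toNat / 2) (x) (y-1) (by omega) (by omega)
        ?_ (by ring)
      simp only [gridCtr, Prod.mk.injEq]
      omega
    · refine step (2 * (x.toNat / 4)) ((y-1).toNat / 2) (x) (y-1) (by omega) (by omega)
        ?_ (by ring)
      simp only [gridCtr, Prod.mk.injEq]
      omega
    · refine step (2 * ((x+1).toNat / 4) + 1) (y.toNat / 2) (x+1) (y) (by omega) (by omega)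
        ?_ (by ring)
      simp only [gridCtr, Prod.mk.injEq]
      omega
    · refine step (2 * ((x+1).toNat / 4)) (y.toNat / 2) (x+1) (y) (by omega) (by omega)
        ?_ (by ring)
      simp only [gridCtr, Prod.mk.injEq]
      omega
    · refine step (2 * ((x-1).toNat / 4)) (y.toNat / 2) (x-1) (y) (by omega) (by omega)
        ?_ (by ring)
      simp only [gridCtr, Prod.mk.injEq]
      omega
    · refine step (2 * ((x-1).toNat / 4) + 1) (y.toNat / 2) (x-1) (y) (by omega) (by omega)
        ?_ (by ring)
      simp only [gridCtr, Prod.mk.injEq]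
      omega

/-- The n×n grid can be covered by at most n²/4 + 2n + 4 unit circles
centered at lattice points (each such circle passes through exactly 4
lattice points). -/
theorem grid_cover_by_unit_circles
    (n : ℕ) :
    ∃ C : Finset (ℤ × ℤ),
      (C.card : ℚ) ≤ (n : ℚ) ^ 2 / 4 + 2 * n + 4 ∧
      ∀ p : ℤ × ℤ, 1 ≤ p.1 → p.1 ≤ (n : ℤ) → 1 ≤ p.2 → p.2 ≤ (n : ℤ) →
        ∃ c ∈ C, (p.1 - c.1) ^ 2 + (p.2 - c.2) ^ 2 = 1 := by
  obtain ⟨C, hcard, hcov⟩ := grid_cover_aux n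
  refine ⟨C, ?_, fun p h1 h2 h3 h4 => hcov p.1 p.2 h1 h2 h3 h4⟩
  have h4' : 4 * ((n+1)/4) ≤ n + 1 := Nat.mul_div_le _ _
  have h2' : 2 * ((n+1)/2) ≤ n + 1 := Nat.mul_div_le _ _
  have hm : (4 * ((n+1)/4)) * (2 * ((n+1)/2)) ≤ (n+1) * (n+1) := Nat.mul_le_mul h4' h2'
  have hAB : 4 * ((2 * ((n+1)/4) + 2) * ((n+1)/2 + 1)) ≤ n^2 + 8*n + 16 := by
    nlinarith [hm, h4', h2']
  have h1 : C.card * 4 ≤ n^2 + 8*n + 16 := by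
    have := Nat.mul_le_mul_right 4 hcard
    omega
  have h2q : (C.card : ℚ) * 4 ≤ (n:ℚ)^2 + 8*(n:ℚ) + 16 := by exact_mod_cast h1
  linarith
end

section
/- There exists a set P of n² points in ℝ² covered by n lines such that any line not among these n lines contains at most 2 points of P, and each of the n lines contains exactly n points of P. -/
noncomputable section
namespace RigidCfg

/-- row y-coordinate of point `k` -/
def rr (n k : ℕ) : ℝ := (k / n : ℕ)

def sol (ga gb ra rb rk : ℝ) : ℝ := ga + (gb - ga) * (rk - ra) / (rb - ra)

/-- x-coordinates chosen recursively to avoid collinearity -/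
def g (n : ℕ) : ℕ → ℝ
  | k => Classical.choose (Infinite.exists_notMem_finset
      ((Finset.univ.image (fun a : Fin k => g n a)) ∪
       (Finset.univ.image (fun ab : Fin k × Fin k =>
         sol (g n ab.1) (g n ab.2) (rr n ab.1) (rr n ab.2) (rr n k)))))
  decreasing_by
  all_goals first | exact a.isLt | exact ab.1.isLt | exact ab.2.isLt

lemma g_spec (n k : ℕ) : (g n k) ∉
    ((Finset.univ.image (fun a : Fin k => g n a)) ∪
       (Finset.univ.image (fun ab : Fin k × Fin k =>
         sol (g n ab.1) (g n ab.2) (rr n ab.1) (rr n ab.2) (rr n k)))) := by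
  rw [g]
  exact Classical.choose_spec (Infinite.exists_notMem_finset _)


lemma g_ne {n a k : ℕ} (h : a < k) : g n a ≠ g n k := by
  intro he
  apply g_spec n k
  apply Finset.mem_union_left
  exact Finset.mem_image.2 ⟨⟨a, h⟩, Finset.mem_univ _, he⟩

lemma g_inj (n : ℕ) : Function.Injective (g n) := by
  intro a b h
  rcases lt_trichotomy a b with h1 | h1 | h1
  · exact absurd h (g_ne h1)
  · exact h1
  · exact absurd h.symm (g_ne h1)

lemma g_avoid {n a b k : ℕ} (ha : a < k) (hb : b < k) :
    g n k ≠ sol (g n a) (g n b) (rr n a) (rr n b) (rr n k) := by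
  intro he
  apply g_spec n k
  apply Finset.mem_union_right
  exact Finset.mem_image.2 ⟨(⟨a, ha⟩, ⟨b, hb⟩), Finset.mem_univ _, he.symm⟩

lemma det_ne {n a b c : ℕ} (hab : a < b) (hbc : b < c)
    (h : ¬(rr n a = rr n b ∧ rr n a = rr n c)) :
    (g n b - g n a) * (rr n c - rr n a) ≠ (g n c - g n a) * (rr n b - rr n a) := by
  intro he
  by_cases hr : rr n a = rr n b
  · have hc : rr n a ≠ rr n c := fun hc => h ⟨hr, hc⟩
    have hg : g n a ≠ g n b := g_ne hab
    rw [← hr, sub_self, mul_zero, mul_eq_zero] at he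
    rcases he with he | he
    · exact hg (sub_eq_zero.1 he).symm
    · exact hc (sub_eq_zero.1 he).symm
  · have hr' : rr n b - rr n a ≠ 0 := fun h0 => hr (sub_eq_zero.1 h0).symm
    apply g_avoid (n := n) (hab.trans hbc) hbc
    unfold sol
    field_simp [hr']
    linear_combination -he

def pt (n k : ℕ) : ℝ × ℝ := (g n k, rr n k)

lemma pt_inj (n : ℕ) : Function.Injective (pt n) := by
  intro a b h
  exact g_inj n (congrArg Prod.fst h)

def Col (p q s : ℝ × ℝ) : Prop :=
  (q.1 - p.1) * (s.2 - p.2) = (s.1 - p.1) * (q.2 - p.2)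

lemma not_col {n a b c : ℕ} (h1 : a ≠ b) (h2 : a ≠ c) (h3 : b ≠ c)
    (hr : ¬(rr n a = rr n b ∧ rr n a = rr n c)) :
    ¬ Col (pt n a) (pt n b) (pt n c) := by
  intro hcol
  unfold Col pt at hcol
  simp only at hcol
  rcases lt_trichotomy a b with hab | hab | hab
  · rcases lt_trichotomy b c with hbc | hbc | hbc
    · exact det_ne hab hbc hr hcol
    · exact h3 hbc
    · rcases lt_trichotomy a c with hac | hac | hac
      · -- a < c < b
        exact det_ne (n := n) hac hbc (by rintro ⟨u, v⟩; exact hr ⟨by grind, by grind⟩) (by linear_combination -hcol)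
      · exact h2 hac
      · -- c < a < b
        exact det_ne (n := n) hac hab (by rintro ⟨u, v⟩; exact hr ⟨by grind, by grind⟩) (by linear_combination hcol)
  · exact h1 hab
  · rcases lt_trichotomy a c with hac | hac | hac
    · -- b < a < c
      exact det_ne (n := n) hab hac (by rintro ⟨u, v⟩; exact hr ⟨by grind, by grind⟩) (by linear_combination -hcol)
    · exact h2 hac
    · rcases lt_trichotomy b c with hbc | hbc | hbc
      · -- b < c < a
        exact det_ne (n := n) hbc hac (by rintro ⟨u, v⟩; exact hr ⟨by grind, by grind⟩) (by linear_combination hcol)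
      · exact h3 hbc
      · -- c < b < a
        exact det_ne (n := n) hbc hab (by rintro ⟨u, v⟩; exact hr ⟨by grind, by grind⟩) (by linear_combination -hcol)

lemma col_of_mem_line {A v p q s : ℝ × ℝ}
    (hp : ∃ t : ℝ, p = A + t • v) (hq : ∃ t : ℝ, q = A + t • v)
    (hs : ∃ t : ℝ, s = A + t • v) : Col p q s := by
  obtain ⟨t1, rfl⟩ := hp
  obtain ⟨t2, rfl⟩ := hq
  obtain ⟨t3, rfl⟩ := hs
  unfold Col
  simp only [Prod.fst_add, Prod.snd_add, Prod.smul_fst, Prod.smul_snd, smul_eq_mul]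
  ring

lemma line_through {A v p q : ℝ × ℝ}
    (hp : ∃ t : ℝ, p = A + t • v) (hq : ∃ t : ℝ, q = A + t • v) (hpq : p ≠ q) :
    {x : ℝ × ℝ | ∃ t : ℝ, x = A + t • v} = {x : ℝ × ℝ | ∃ s : ℝ, x = p + s • (q - p)} := by
  obtain ⟨t1, hp⟩ := hp
  obtain ⟨t2, hq⟩ := hq
  have ht : t2 - t1 ≠ 0 := by
    intro h0
    apply hpq
    rw [hp, hq, sub_eq_zero.1 h0]
  have hqp : q - p = (t2 - t1) • v := by rw [hp, hq, sub_smul]; abel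
  ext x
  simp only [Set.mem_setOf_eq]
  constructor
  · rintro ⟨t, rfl⟩
    refine ⟨(t - t1) / (t2 - t1), ?_⟩
    have h1 : t1 + (t - t1) = t := by ring
    rw [hqp, smul_smul, div_mul_cancel₀ _ ht, hp, add_assoc, ← add_smul, h1]
  · rintro ⟨sv, rfl⟩
    refine ⟨t1 + sv * (t2 - t1), ?_⟩
    rw [hqp, smul_smul, hp, add_smul, add_assoc]

lemma mem_horiz {c : ℝ} {p : ℝ × ℝ} :
    p ∈ {x : ℝ × ℝ | ∃ t : ℝ, x = ((0 : ℝ), c) + t • ((1 : ℝ), (0 : ℝ))} ↔ p.2 = c := by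
  constructor
  · rintro ⟨t, rfl⟩; simp
  · intro h
    refine ⟨p.1, ?_⟩
    rw [Prod.ext_iff]
    constructor <;> simp [h]

end RigidCfg
open RigidCfg

/-- There exists a set P of n² points in ℝ² covered by n lines such that each
of the n lines contains exactly n points of P and any other line contains at
most 2 points of P. -/
theorem exists_rigid_point_line_configuration
    (n : ℕ)
    (IsLine : Set (ℝ × ℝ) → Prop)
    (hIsLine : ∀ L, IsLine L ↔ ∃ (a v : ℝ × ℝ), v ≠ 0 ∧
      L = {p | ∃ t : ℝ, p = a + t • v}) :
    ∃ (P : Finset (ℝ × ℝ)) (𝓛 : Fin n → Set (ℝ × ℝ)),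
      P.card = n ^ 2 ∧
      (∀ i, IsLine (𝓛 i)) ∧
      (∀ p ∈ P, ∃ i, p ∈ 𝓛 i) ∧
      (∀ i, ((P : Set (ℝ × ℝ)) ∩ 𝓛 i).ncard = n) ∧
      (∀ L, IsLine L → (∀ i, L ≠ 𝓛 i) →
        ((P : Set (ℝ × ℝ)) ∩ L).ncard ≤ 2) := by
  classical
  refine ⟨(Finset.range (n ^ 2)).image (pt n),
    fun i => {x : ℝ × ℝ | ∃ t : ℝ, x = ((0 : ℝ), (i : ℝ)) + t • ((1 : ℝ), (0 : ℝ))},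
    ?_, ?_, ?_, ?_, ?_⟩
  · rw [Finset.card_image_of_injective _ (pt_inj n), Finset.card_range]
  · intro i
    rw [hIsLine]
    exact ⟨((0 : ℝ), (i : ℝ)), ((1 : ℝ), (0 : ℝ)), by norm_num [Prod.ext_iff], rfl⟩
  · intro p hp
    rw [Finset.mem_image] at hp
    obtain ⟨k, hk, rfl⟩ := hp
    rw [Finset.mem_range] at hk
    have hn : 0 < n := by
      rcases Nat.eq_zero_or_pos n with h | h
      · subst h; simp at hk
      · exact h
    have hkn : k / n < n := (Nat.div_lt_iff_lt_mul hn).2 (by rwa [← pow_two])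
    refine ⟨⟨k / n, hkn⟩, mem_horiz.2 ?_⟩
    show rr n k = _
    simp [rr]
  · intro i
    have hn : 0 < n := i.pos
    have key : (↑((Finset.range (n ^ 2)).image (pt n)) : Set (ℝ × ℝ)) ∩
        {x : ℝ × ℝ | ∃ t : ℝ, x = ((0 : ℝ), (i : ℝ)) + t • ((1 : ℝ), (0 : ℝ))} =
        ↑((Finset.Ico (n * i.1) (n * i.1 + n)).image (pt n)) := by
      ext p
      simp only [Set.mem_inter_iff, Finset.coe_image, Set.mem_image, Finset.mem_coe,
        Finset.mem_range, Finset.mem_Ico]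
      constructor
      · rintro ⟨⟨k, hk, rfl⟩, hL⟩
        have h2 : rr n k = (i : ℝ) := mem_horiz.1 hL
        have h3 : k / n = i.1 := by
          have := h2
          unfold rr at this
          exact_mod_cast this
        refine ⟨k, ⟨?_, ?_⟩, rfl⟩
        · have h9 := (Nat.le_div_iff_mul_le hn).1 (le_of_eq h3.symm)
          rw [mul_comm]
          exact h9
        · have h4 : k / n < i.1 + 1 := by omega
          have h5 := (Nat.div_lt_iff_lt_mul hn).1 h4
          calc k < (i.1 + 1) * n := h5
            _ = n * i.1 + n := by ring
      · rintro ⟨k, hk, rfl⟩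
        have hdiv : k / n = i.1 := by
          refine Nat.div_eq_of_lt_le ?_ ?_
          · calc i.1 * n = n * i.1 := by ring
              _ ≤ k := hk.1
          · calc k < n * i.1 + n := hk.2
              _ = (i.1 + 1) * n := by ring
        refine ⟨⟨k, ?_, rfl⟩, mem_horiz.2 ?_⟩
        · have h5 : i.1 + 1 ≤ n := i.2
          calc k < n * i.1 + n := hk.2
            _ = n * (i.1 + 1) := by ring
            _ ≤ n * n := Nat.mul_le_mul_left _ h5
            _ = n ^ 2 := (sq n).symm
        · show rr n k = _
          simp [rr, hdiv]
    show ((↑((Finset.range (n ^ 2)).image (pt n)) : Set (ℝ × ℝ)) ∩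
        {x : ℝ × ℝ | ∃ t : ℝ, x = ((0 : ℝ), (i : ℝ)) + t • ((1 : ℝ), (0 : ℝ))}).ncard = n
    rw [key, Set.ncard_coe_finset, Finset.card_image_of_injective _ (pt_inj n), Nat.card_Ico]
    omega
  · intro L hL hne
    by_contra hc
    push_neg at hc
    obtain ⟨A, v, hv, rfl⟩ := (hIsLine L).1 hL
    obtain ⟨T, hTS, hT3⟩ := Set.exists_subset_card_eq (s := (↑((Finset.range (n ^ 2)).image (pt n)) : Set (ℝ × ℝ)) ∩ {p | ∃ t : ℝ, p = A + t • v}) (n := 3) (by omega)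
    obtain ⟨p, q, r, hpq, hpr, hqr, rfl⟩ := Set.ncard_eq_three.1 hT3
    have hp := hTS (Set.mem_insert _ _)
    have hq := hTS (Set.mem_insert_of_mem _ (Set.mem_insert _ _))
    have hr := hTS (Set.mem_insert_of_mem _ (Set.mem_insert_of_mem _ rfl))
    obtain ⟨hpP, hpL⟩ := hp
    obtain ⟨hqP, hqL⟩ := hq
    obtain ⟨hrP, hrL⟩ := hr
    rw [Finset.mem_coe, Finset.mem_image] at hpP hqP hrP
    obtain ⟨a, ha, hpa⟩ := hpP
    obtain ⟨b, hb, hqb⟩ := hqP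
    obtain ⟨c, hcc, hrc⟩ := hrP
    rw [Finset.mem_range] at ha hb hcc
    have hab : a ≠ b := fun h => hpq (by rw [← hpa, ← hqb, h])
    have hac : a ≠ c := fun h => hpr (by rw [← hpa, ← hrc, h])
    have hbc : b ≠ c := fun h => hqr (by rw [← hqb, ← hrc, h])
    by_cases hrow : rr n a = rr n b ∧ rr n a = rr n c
    · have hn : 0 < n := by
        rcases Nat.eq_zero_or_pos n with h | h
        · subst h; simp at ha
        · exact h
      have hkn : a / n < n := (Nat.div_lt_iff_lt_mul hn).2 (by rwa [← pow_two])
      apply hne ⟨a / n, hkn⟩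
      have h1 := line_through (A := A) (v := v) hpL hqL hpq
      have hpH : ∃ t : ℝ, p = ((0 : ℝ), ((a / n : ℕ) : ℝ)) + t • ((1 : ℝ), (0 : ℝ)) := by
        apply mem_horiz.2
        rw [← hpa]
        show rr n a = _
        simp [rr]
      have hqH : ∃ t : ℝ, q = ((0 : ℝ), ((a / n : ℕ) : ℝ)) + t • ((1 : ℝ), (0 : ℝ)) := by
        apply mem_horiz.2
        rw [← hqb]
        show rr n b = _
        rw [← hrow.1]
        simp [rr]
      have h2 := line_through (A := ((0 : ℝ), ((a / n : ℕ) : ℝ)))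
        (v := ((1 : ℝ), (0 : ℝ))) hpH hqH hpq
      rw [h1, ← h2]
    · refine not_col (n := n) hab hac hbc hrow ?_
      rw [← hpa] at hpL
      rw [← hqb] at hqL
      rw [← hrc] at hrL
      exact col_of_mem_line hpL hqL hrL
end
end
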